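/- arXiv:1607.05181 — 13 statements merged into one kernel-verified Lean document; each statement's English description precedes it below -/
import Mathlib

section
/- Asymptotic property C is invariant under coarse equivalence: if f : X → Y is a coarse equivalence of metric spaces and Y has asymptotic property C, then X has asymptotic property C. -/
section Defs
variable {α : Type*}

/-- A family of subsets is `R`-disjoint: distinct members are at pairwise distance `> R`. -/
def RDisj (d : α → α → ℝ) (R : ℝ) (𝒰 : Set (Set α)) : Prop :=
  ∀ A ∈ 𝒰, ∀ B ∈ 𝒰, A ≠ B → ∀ x ∈ A, ∀ y ∈ B, R < d x y

/-- Every member of the family has diameter (mesh) at most `B`. -/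
def BddFam (d : α → α → ℝ) (B : ℝ) (𝒰 : Set (Set α)) : Prop :=
  ∀ A ∈ 𝒰, ∀ x ∈ A, ∀ y ∈ A, d x y ≤ B

/-- The family is uniformly bounded. -/
def UnifBdd (d : α → α → ℝ) (𝒰 : Set (Set α)) : Prop := ∃ B : ℝ, BddFam d B 𝒰

/-- Asymptotic property C with respect to the distance function `d`. -/
def APCD (d : α → α → ℝ) : Prop :=
  ∀ R : ℕ → ℝ, ∃ n : ℕ, ∃ 𝒰 : ℕ → Set (Set α),
    (∀ x : α, ∃ i < n, ∃ S ∈ 𝒰 i, x ∈ S) ∧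
    (∀ i < n, RDisj d (R i) (𝒰 i)) ∧
    (∀ i < n, UnifBdd d (𝒰 i))

/-- The subset `A` has asymptotic dimension at most `n` (w.r.t. distance `d`). -/
def AsdimLE (d : α → α → ℝ) (A : Set α) (n : ℕ) : Prop :=
  ∀ R : ℝ, 0 < R → ∃ B : ℝ, ∃ 𝒰 : Fin (n + 1) → Set (Set α),
    (∀ i, ∀ S ∈ 𝒰 i, S ⊆ A) ∧
    (∀ x ∈ A, ∃ i, ∃ S ∈ 𝒰 i, x ∈ S) ∧
    (∀ i, RDisj d R (𝒰 i)) ∧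
    (∀ i, BddFam d B (𝒰 i))

end Defs

/-- `f` is effectively proper: some proper (tending to infinity) non-decreasing
`ρ₁ : [0,∞) → [0,∞)` satisfies `ρ₁ (d x x') ≤ d (f x) (f x')`. -/
def EffectivelyProper {X Y : Type*} [MetricSpace X] [MetricSpace Y] (f : X → Y) : Prop :=
  ∃ ρ₁ : ℝ → ℝ, Monotone ρ₁ ∧ (∀ t, 0 ≤ t → 0 ≤ ρ₁ t) ∧
    Filter.Tendsto ρ₁ Filter.atTop Filter.atTop ∧
    ∀ x x' : X, ρ₁ (dist x x') ≤ dist (f x) (f x')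

/-- `f` is uniformly expansive. -/
def UniformlyExpansive {X Y : Type*} [MetricSpace X] [MetricSpace Y] (f : X → Y) : Prop :=
  ∃ ρ₂ : ℝ → ℝ, Monotone ρ₂ ∧ ∀ x x' : X, dist (f x) (f x') ≤ ρ₂ (dist x x')

/-- `f` is coarsely surjective. -/
def CoarselySurjective {X Y : Type*} [MetricSpace X] [MetricSpace Y] (f : X → Y) : Prop :=
  ∃ R : ℝ, ∀ y : Y, ∃ x : X, dist y (f x) < R

/-- Asymptotic property C is invariant under coarse equivalence. -/
theorem apc_coarse_invariant {X Y : Type*} [MetricSpace X] [MetricSpace Y]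
    (f : X → Y) (hprop : EffectivelyProper f) (hexp : UniformlyExpansive f)
    (hsurj : CoarselySurjective f)
    (hY : APCD (dist : Y → Y → ℝ)) :
    APCD (dist : X → X → ℝ) := by
  obtain ⟨ρ₁, hρ₁mono, hρ₁nonneg, hρ₁tend, hρ₁⟩ := hprop
  obtain ⟨ρ₂, hρ₂mono, hρ₂⟩ := hexp
  intro R
  obtain ⟨n, 𝒱, hcover, hdisj, hbdd⟩ := hY (fun i => ρ₂ (R i))
  refine ⟨n, fun i => (fun S => f ⁻¹' S) '' 𝒱 i, ?_, ?_, ?_⟩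
  · intro x
    obtain ⟨i, hi, S, hS, hx⟩ := hcover (f x)
    exact ⟨i, hi, f ⁻¹' S, ⟨S, hS, rfl⟩, hx⟩
  · intro i hi A hA B hB hAB x hx y hy
    obtain ⟨A', hA', rfl⟩ := hA
    obtain ⟨B', hB', rfl⟩ := hB
    have hAB' : A' ≠ B' := fun h => hAB (by rw [h])
    have h1 := hdisj i hi A' hA' B' hB' hAB' (f x) hx (f y) hy
    by_contra h
    push_neg at h
    exact absurd (lt_of_lt_of_le h1 (hρ₂ x y)) (not_lt.2 (hρ₂mono h))
  · intro i hi
    obtain ⟨B, hB⟩ := hbdd i hi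
    obtain ⟨B', hB'⟩ := Filter.eventually_atTop.1 (Filter.tendsto_atTop.1 hρ₁tend (B + 1))
    refine ⟨B', ?_⟩
    rintro A ⟨A', hA', rfl⟩ x hx y hy
    by_contra h
    push_neg at h
    have h0 := hB' (dist x y) h.le
    have h2 := hρ₁ x y
    have h3 := hB A' hA' (f x) hx (f y) hy
    linarith
end

section
/- Fibering Lemma: Let f : X → Y be a uniformly expansive map of metric spaces. If Y has asymptotic property C and the coarse fibers of f have uniform asymptotic property C, then X has asymptotic property C. -/
/-- Coarse fibers of `f` have uniform asymptotic property C (w.r.t. distances `dX`, `dY`). -/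
def CoarseFibersUAPC {α β : Type*} (dX : α → α → ℝ) (dY : β → β → ℝ) (f : α → β) : Prop :=
  ∀ R : ℕ → ℝ, ∃ k : ℕ, ∀ M : ℝ, ∃ B : ℝ,
    ∀ A : Set α, (∀ x ∈ A, ∀ y ∈ A, dY (f x) (f y) < M) →
      ∃ 𝒰 : Fin k → Set (Set α),
        (∀ i, ∀ S ∈ 𝒰 i, S ⊆ A) ∧
        (∀ x ∈ A, ∃ i, ∃ S ∈ 𝒰 i, x ∈ S) ∧
        (∀ i : Fin k, RDisj dX (R i.1) (𝒰 i)) ∧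
        (∀ i, BddFam dX B (𝒰 i))

/-- Fibering Lemma: if `f : X → Y` is uniformly expansive, `Y` has asymptotic
property C, and coarse fibers of `f` have uniform asymptotic property C,
then `X` has asymptotic property C. -/
theorem fibering_lemma {X Y : Type*} [MetricSpace X] [MetricSpace Y] (f : X → Y)
    (hexp : ∃ ρ : ℝ → ℝ, Monotone ρ ∧ ∀ x x' : X, dist (f x) (f x') ≤ ρ (dist x x'))
    (hY : APCD (dist : Y → Y → ℝ))
    (hfib : CoarseFibersUAPC (dist : X → X → ℝ) (dist : Y → Y → ℝ) f) :
    APCD (dist : X → X → ℝ) := by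
  obtain ⟨ρ, hρm, hρ⟩ := hexp
  intro R
  obtain ⟨R', hRle, hR'mono⟩ : ∃ R' : ℕ → ℝ, (∀ m, R m ≤ R' m) ∧ Monotone R' := by
    refine ⟨fun m => Nat.rec (R 0) (fun m' r => max r (R (m'+1))) m, ?_, ?_⟩
    · intro m
      cases m with
      | zero => exact le_refl _
      | succ m' => exact le_max_right _ _
    · exact monotone_nat_of_le_succ fun m => le_max_left _ _
  choose K hK using hfib
  choose Bf hBf using hK
  obtain ⟨c, hc0, hc⟩ : ∃ c : ℕ → ℕ, c 0 = 0 ∧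
      ∀ j, c (j+1) = c j + K (fun i => R' (c j + i)) :=
    ⟨fun j => Nat.rec 0 (fun _ cj => cj + K (fun i => R' (cj + i))) j, rfl, fun _ => rfl⟩
  have hcmono : Monotone c := monotone_nat_of_le_succ fun j => by rw [hc]; omega
  have huniq : ∀ a b m : ℕ, c a ≤ m → m < c (a+1) → c b ≤ m → m < c (b+1) → a = b := by
    intro a b m h1 h2 h3 h4
    by_contra hne
    rcases Nat.lt_or_ge a b with h | h
    · have := hcmono (show a + 1 ≤ b from h)
      omega
    · have hba : b < a := by omega
      have := hcmono (show b + 1 ≤ a from hba)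
      omega
  have hfind : ∀ N m, m < c N → ∃ j, j < N ∧ c j ≤ m ∧ m < c (j+1) := by
    intro N
    induction N with
    | zero => intro m hm; rw [hc0] at hm; omega
    | succ N ih =>
      intro m hm
      by_cases h : m < c N
      · obtain ⟨j, h1, h2, h3⟩ := ih m h
        exact ⟨j, by omega, h2, h3⟩
      · exact ⟨N, Nat.lt_succ_self N, Nat.le_of_not_lt h, hm⟩
  obtain ⟨n, 𝒱, hcov, hdisj, hbdd⟩ := hY fun j => ρ (R' (c (j+1)))
  obtain ⟨BY, hBY⟩ : ∃ BY : ℕ → ℝ, ∀ j, j < n → BddFam dist (BY j) (𝒱 j) := by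
    have h : ∀ j, ∃ b : ℝ, j < n → BddFam dist b (𝒱 j) := by
      intro j
      by_cases hj : j < n
      · exact ⟨(hbdd j hj).choose, fun _ => (hbdd j hj).choose_spec⟩
      · exact ⟨0, fun h' => absurd h' hj⟩
    exact ⟨fun j => (h j).choose, fun j => (h j).choose_spec⟩
  have hD : ∀ (j : ℕ) (V : Set Y), ∃ 𝒰 : Fin (K fun i => R' (c j + i)) → Set (Set X),
      (∀ x ∈ f ⁻¹' V, ∀ y ∈ f ⁻¹' V, dist (f x) (f y) < BY j + 1) →
      ((∀ i, ∀ S ∈ 𝒰 i, S ⊆ f ⁻¹' V) ∧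
       (∀ x ∈ f ⁻¹' V, ∃ i, ∃ S ∈ 𝒰 i, x ∈ S) ∧
       (∀ i, RDisj dist (R' (c j + i.1)) (𝒰 i)) ∧
       (∀ i, BddFam dist (Bf (fun i => R' (c j + i)) (BY j + 1)) (𝒰 i))) := by
    intro j V
    by_cases h : ∀ x ∈ f ⁻¹' V, ∀ y ∈ f ⁻¹' V, dist (f x) (f y) < BY j + 1
    · obtain ⟨𝒰, h1, h2, h3, h4⟩ := hBf (fun i => R' (c j + i)) (BY j + 1) (f ⁻¹' V) h
      exact ⟨𝒰, fun _ => ⟨h1, h2, h3, h4⟩⟩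
    · exact ⟨fun _ => ∅, fun h' => absurd h' h⟩
  choose D hDspec using hD
  have hfc : ∀ j, j < n → ∀ V ∈ 𝒱 j, ∀ a ∈ f ⁻¹' V, ∀ b ∈ f ⁻¹' V,
      dist (f a) (f b) < BY j + 1 := by
    intro j hj V hV a ha b hb
    have := hBY j hj V hV (f a) ha (f b) hb
    linarith
  refine ⟨c n, fun m => {S | ∃ j, j < n ∧ c j ≤ m ∧ m < c (j+1) ∧
      ∃ V ∈ 𝒱 j, ∃ hi : m - c j < K (fun i => R' (c j + i)), S ∈ D j V ⟨m - c j, hi⟩},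
    ?_, ?_, ?_⟩
  · -- coverage
    intro x
    obtain ⟨j, hj, V, hV, hfx⟩ := hcov (f x)
    obtain ⟨h1, h2, h3, h4⟩ := hDspec j V (hfc j hj V hV)
    obtain ⟨i, S, hS, hxS⟩ := h2 x hfx
    have hik := i.isLt
    have hm1 : c j + i.1 < c (j+1) := by rw [hc]; omega
    have hival : c j + i.1 - c j = i.1 := by omega
    refine ⟨c j + i.1, lt_of_lt_of_le hm1 (hcmono (show j + 1 ≤ n from hj)), S,
      ⟨j, hj, Nat.le_add_right _ _, hm1, V, hV, by omega, ?_⟩, hxS⟩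
    have heq : (⟨c j + i.1 - c j, by omega⟩ : Fin (K fun i => R' (c j + i))) = i :=
      Fin.ext hival
    rw [heq]
    exact hS
  · -- disjointness
    intro m hm
    intro A₁ hA₁ A₂ hA₂ hne x hx y hy
    obtain ⟨j₁, hj₁, ha₁, hb₁, V₁, hV₁, hi₁, hS₁⟩ := hA₁
    obtain ⟨j₂, hj₂, ha₂, hb₂, V₂, hV₂, hi₂, hS₂⟩ := hA₂
    obtain rfl : j₂ = j₁ := huniq j₂ j₁ m ha₂ hb₂ ha₁ hb₁
    obtain ⟨p1, -, p3, -⟩ := hDspec j₂ V₁ (hfc j₂ hj₂ V₁ hV₁)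
    obtain ⟨q1, -, q3, -⟩ := hDspec j₂ V₂ (hfc j₂ hj₂ V₂ hV₂)
    by_cases hVeq : V₁ = V₂
    · subst hVeq
      have key : R' (c j₂ + (m - c j₂)) < dist x y :=
        p3 ⟨m - c j₂, hi₁⟩ A₁ hS₁ A₂ hS₂ hne x hx y hy
      have hval : c j₂ + (m - c j₂) = m := by omega
      rw [hval] at key
      have := hRle m
      linarith
    · have hfx' : f x ∈ V₁ := p1 ⟨m - c j₂, hi₁⟩ A₁ hS₁ hx
      have hfy' : f y ∈ V₂ := q1 ⟨m - c j₂, hi₂⟩ A₂ hS₂ hy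
      have hYd : ρ (R' (c (j₂+1))) < dist (f x) (f y) :=
        hdisj j₂ hj₂ V₁ hV₁ V₂ hV₂ hVeq (f x) hfx' (f y) hfy'
      by_contra hcon
      push_neg at hcon
      have h1 : dist x y ≤ R' (c (j₂+1)) :=
        le_trans hcon (le_trans (hRle m) (hR'mono (Nat.le_of_lt hb₁)))
      have h2 : dist (f x) (f y) ≤ ρ (R' (c (j₂+1))) :=
        le_trans (hρ x y) (hρm h1)
      linarith
  · -- uniform boundedness
    intro m hm
    obtain ⟨j, hj, h1, h2⟩ := hfind n m hm
    refine ⟨Bf (fun i => R' (c j + i)) (BY j + 1), ?_⟩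
    intro A hA x hx y hy
    obtain ⟨j', hj', ha', hb', V, hV, hi, hS⟩ := hA
    obtain rfl : j' = j := huniq j' j m ha' hb' h1 h2
    obtain ⟨-, -, -, p4⟩ := hDspec j' V (hfc j' hj' V hV)
    exact p4 ⟨m - c j', hi⟩ A hS x hx y hy
end

section
/- If X and Y are metric spaces, f : X × Y → Y is the projection, and X has asymptotic property C, then the coarse fibers of f have uniform asymptotic property C. -/
/-- The ℓ² product metric on `X × Y`. -/
noncomputable def prodDist {X Y : Type*} [MetricSpace X] [MetricSpace Y] :
    X × Y → X × Y → ℝ :=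
  fun p q => Real.sqrt (dist p.1 q.1 ^ 2 + dist p.2 q.2 ^ 2)

/-- If `X` has asymptotic property C, then the coarse fibers of the projection
`X × Y → Y` (ℓ² product metric) have uniform asymptotic property C. -/
theorem projection_coarse_fibers {X Y : Type*} [MetricSpace X] [MetricSpace Y]
    (hX : APCD (dist : X → X → ℝ)) :
    CoarseFibersUAPC (prodDist : X × Y → X × Y → ℝ) (dist : Y → Y → ℝ)
      (Prod.snd : X × Y → Y) := by
  intro R
  obtain ⟨n, 𝒰, hcov, hdisj, hbdd⟩ := hX R
  refine ⟨n, ?_⟩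
  intro M
  have hg : ∀ i, ∃ b, i < n → BddFam dist b (𝒰 i) := by
    intro i
    by_cases h : i < n
    · obtain ⟨b, hb⟩ := hbdd i h
      exact ⟨b, fun _ => hb⟩
    · exact ⟨0, fun h' => absurd h' h⟩
  choose g hg using hg
  set Bx : ℝ := ∑ i ∈ Finset.range n, |g i| with hBx
  have hBxi : ∀ i < n, g i ≤ Bx := fun i hi =>
    le_trans (le_abs_self _) (Finset.single_le_sum (f := fun j => |g j|)
      (fun _ _ => abs_nonneg _) (Finset.mem_range.mpr hi))
  refine ⟨Real.sqrt (Bx ^ 2 + M ^ 2), ?_⟩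
  intro A hA
  refine ⟨fun i => (fun S => (S ×ˢ (Set.univ : Set Y)) ∩ A) '' (𝒰 i.1), ?_, ?_, ?_, ?_⟩
  · rintro i S ⟨T, hT, rfl⟩
    exact Set.inter_subset_right
  · intro p hp
    obtain ⟨i, hi, S, hS, hpS⟩ := hcov p.1
    exact ⟨⟨i, hi⟩, _, ⟨S, hS, rfl⟩, ⟨⟨hpS, Set.mem_univ _⟩, hp⟩⟩
  · rintro i P ⟨S, hS, rfl⟩ Q ⟨T, hT, rfl⟩ hne p hp q hq
    have hST : S ≠ T := by rintro rfl; exact hne rfl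
    have h1 : R i.1 < dist p.1 q.1 :=
      hdisj i.1 i.2 S hS T hT hST p.1 hp.1.1 q.1 hq.1.1
    refine lt_of_lt_of_le h1 ?_
    calc dist p.1 q.1 ≤ Real.sqrt ((dist p.1 q.1) ^ 2) := by
          rw [Real.sqrt_sq dist_nonneg]
      _ ≤ prodDist p q := Real.sqrt_le_sqrt (le_add_of_nonneg_right (sq_nonneg _))
  · rintro i P ⟨S, hS, rfl⟩ p hp q hq
    have h1 : dist p.1 q.1 ≤ Bx :=
      le_trans (hg i.1 i.2 S hS p.1 hp.1.1 q.1 hq.1.1) (hBxi i.1 i.2)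
    have h2 : dist p.2 q.2 ≤ M := le_of_lt (hA p hp.2 q hq.2)
    have h3 : dist p.1 q.1 ^ 2 ≤ Bx ^ 2 := pow_le_pow_left₀ dist_nonneg h1 2
    have h4 : dist p.2 q.2 ^ 2 ≤ M ^ 2 := pow_le_pow_left₀ dist_nonneg h2 2
    exact Real.sqrt_le_sqrt (add_le_add h3 h4)
end

section
/- Decomposition Lemma: Let X be a metric space and suppose there exists k such that for every sequence R₁, R₂, … of reals there exist finitely many families U₁, …, Uₙ of subsets of X whose union covers X, each Uᵢ is Rᵢ-disjoint, and each family Uᵢ has asymptotic dimension at most k − 1 uniformly. Then X has asymptotic property C. -/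
/-- The family `𝒰` has asymptotic dimension at most `n` uniformly: for every `R`
there is a single bound `B` such that every member is covered by `n + 1`
`R`-disjoint families of `B`-bounded sets. -/
def UnifAsdimLE {α : Type*} (d : α → α → ℝ) (𝒰 : Set (Set α)) (n : ℕ) : Prop :=
  ∀ R : ℝ, 0 < R → ∃ B : ℝ, ∀ A ∈ 𝒰, ∃ 𝒱 : Fin (n + 1) → Set (Set α),
    (∀ i, ∀ S ∈ 𝒱 i, S ⊆ A) ∧
    (∀ x ∈ A, ∃ i, ∃ S ∈ 𝒱 i, x ∈ S) ∧
    (∀ i, RDisj d R (𝒱 i)) ∧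
    (∀ i, BddFam d B (𝒱 i))

/-- Decomposition Lemma: if there is `k` such that for every sequence `R₁, R₂, …`
there are finitely many families `𝒰₁, …, 𝒰ₙ` of subsets of `X` covering `X`,
with `𝒰ᵢ` being `Rᵢ`-disjoint and of asymptotic dimension at most `k - 1`
uniformly, then `X` has asymptotic property C. -/
theorem decomposition_lemma {X : Type*} [MetricSpace X]
    (h : ∃ k : ℕ, ∀ R : ℕ → ℝ, ∃ n : ℕ, ∃ 𝒰 : ℕ → Set (Set X),
      (∀ x : X, ∃ i < n, ∃ S ∈ 𝒰 i, x ∈ S) ∧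
      (∀ i < n, RDisj (dist : X → X → ℝ) (R i) (𝒰 i)) ∧
      (∀ i < n, UnifAsdimLE (dist : X → X → ℝ) (𝒰 i) (k - 1))) :
    APCD (dist : X → X → ℝ) := by

  obtain ⟨k, h⟩ := h
  intro R
  set m := k - 1 + 1 with hm
  have hm0 : 0 < m := Nat.succ_pos _
  set R' : ℕ → ℝ := fun i => 1 + ∑ t ∈ Finset.range m, |R (m * i + t)| with hR'
  have hR'pos : ∀ i, 0 < R' i := by
    intro i
    have h0 : (0:ℝ) ≤ ∑ t ∈ Finset.range m, |R (m * i + t)| :=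
      Finset.sum_nonneg fun t _ => abs_nonneg _
    simp only [hR']
    linarith
  have hR'ge : ∀ i t, t < m → R (m * i + t) ≤ R' i := by
    intro i t ht
    have h1 : |R (m*i+t)| ≤ ∑ s ∈ Finset.range m, |R (m * i + s)| :=
      Finset.single_le_sum (f := fun s => |R (m * i + s)|) (fun _ _ => abs_nonneg _) (Finset.mem_range.mpr ht)
    have h2 := le_abs_self (R (m*i+t))
    simp only [hR']
    linarith
  obtain ⟨n, 𝒰, hcov, hdisj, hdim⟩ := h R'
  have key : ∀ i, ∃ B : ℝ, ∀ A : Set X, ∃ 𝒱 : Fin m → Set (Set X),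
      i < n → A ∈ 𝒰 i →
      (∀ t, ∀ S ∈ 𝒱 t, S ⊆ A) ∧ (∀ x ∈ A, ∃ t, ∃ S ∈ 𝒱 t, x ∈ S) ∧
      (∀ t, RDisj (dist : X → X → ℝ) (R' i) (𝒱 t)) ∧
      (∀ t, BddFam (dist : X → X → ℝ) B (𝒱 t)) := by
    intro i
    by_cases hi : i < n
    · obtain ⟨B, hB⟩ := hdim i hi (R' i) (hR'pos i)
      refine ⟨B, fun A => ?_⟩
      by_cases hA : A ∈ 𝒰 i
      · obtain ⟨𝒱, p⟩ := hB A hA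
        exact ⟨𝒱, fun _ _ => p⟩
      · exact ⟨fun _ => ∅, fun _ hA' => absurd hA' hA⟩
    · exact ⟨0, fun A => ⟨fun _ => ∅, fun hi' => absurd hi' hi⟩⟩
  choose B hB using key
  choose 𝒱 h𝒱 using hB
  refine ⟨m * n, fun j => {S | ∃ A ∈ 𝒰 (j / m), S ∈ 𝒱 (j / m) A ⟨j % m, Nat.mod_lt _ hm0⟩},
    ?_, ?_, ?_⟩
  · intro x
    obtain ⟨i, hi, A, hA, hxA⟩ := hcov x
    obtain ⟨-, hc, -, -⟩ := h𝒱 i A hi hA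
    obtain ⟨t, S, hS, hxS⟩ := hc x hxA
    have ediv : (m * i + (t : ℕ)) / m = i := by
      rw [Nat.mul_add_div hm0, Nat.div_eq_of_lt t.isLt, Nat.add_zero]
    have emod : ((m * i + (t : ℕ)) % m) = (t : ℕ) := by
      rw [Nat.mul_add_mod, Nat.mod_eq_of_lt t.isLt]
    have efin : (⟨(m * i + (t : ℕ)) % m, Nat.mod_lt _ hm0⟩ : Fin m) = t :=
      Fin.ext emod
    refine ⟨m * i + (t : ℕ), ?_, S, ?_, hxS⟩
    · calc m * i + (t : ℕ) < m * i + m := by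
            exact Nat.add_lt_add_left t.isLt _
        _ = m * (i + 1) := by ring
        _ ≤ m * n := Nat.mul_le_mul_left _ hi
    · simp only [Set.mem_setOf_eq, ediv, efin]
      exact ⟨A, hA, hS⟩
  · intro j hj
    have hjn : j / m < n := Nat.div_lt_of_lt_mul (by rw [Nat.mul_comm] at hj ⊢; exact hj)
    have hRle : R j ≤ R' (j / m) := by
      have := hR'ge (j / m) (j % m) (Nat.mod_lt _ hm0)
      rwa [Nat.div_add_mod] at this
    rintro S ⟨A, hA, hS⟩ S' ⟨A', hA', hS'⟩ hne x hx y hy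
    by_cases hAA : A = A'
    · subst hAA
      obtain ⟨-, -, hd, -⟩ := h𝒱 (j / m) A hjn hA
      have := hd _ S hS S' hS' hne x hx y hy
      linarith
    · obtain ⟨hsub, -, -, -⟩ := h𝒱 (j / m) A hjn hA
      obtain ⟨hsub', -, -, -⟩ := h𝒱 (j / m) A' hjn hA'
      have := hdisj (j / m) hjn A hA A' hA' hAA x (hsub _ S hS hx) y (hsub' _ S' hS' hy)
      linarith
  · intro j hj
    have hjn : j / m < n := Nat.div_lt_of_lt_mul (by rw [Nat.mul_comm] at hj ⊢; exact hj)
    refine ⟨B (j / m), ?_⟩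
    rintro S ⟨A, hA, hS⟩ x hx y hy
    obtain ⟨-, -, -, hbd⟩ := h𝒱 (j / m) A hjn hA
    exact hbd _ S hS x hx y hy
end

section
/- If X has asymptotic property C and Y has finite asymptotic dimension, then X × Y (with the ℓ² product metric) has asymptotic property C. -/
lemma dist_fst_le_prodDist {X Y : Type*} [MetricSpace X] [MetricSpace Y] (p q : X × Y) :
    dist p.1 q.1 ≤ prodDist p q := by
  unfold prodDist
  calc dist p.1 q.1 = |dist p.1 q.1| := (abs_of_nonneg dist_nonneg).symm
    _ = Real.sqrt (dist p.1 q.1 ^ 2) := (Real.sqrt_sq_eq_abs _).symm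
    _ ≤ _ := Real.sqrt_le_sqrt (le_add_of_nonneg_right (sq_nonneg _))

lemma dist_snd_le_prodDist {X Y : Type*} [MetricSpace X] [MetricSpace Y] (p q : X × Y) :
    dist p.2 q.2 ≤ prodDist p q := by
  unfold prodDist
  calc dist p.2 q.2 = |dist p.2 q.2| := (abs_of_nonneg dist_nonneg).symm
    _ = Real.sqrt (dist p.2 q.2 ^ 2) := (Real.sqrt_sq_eq_abs _).symm
    _ ≤ _ := Real.sqrt_le_sqrt (le_add_of_nonneg_left (sq_nonneg _))

lemma prodDist_le_add {X Y : Type*} [MetricSpace X] [MetricSpace Y] (p q : X × Y) :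
    prodDist p q ≤ dist p.1 q.1 + dist p.2 q.2 := by
  unfold prodDist
  have h1 : (0:ℝ) ≤ dist p.1 q.1 := dist_nonneg
  have h2 : (0:ℝ) ≤ dist p.2 q.2 := dist_nonneg
  calc Real.sqrt (dist p.1 q.1 ^ 2 + dist p.2 q.2 ^ 2)
      ≤ Real.sqrt ((dist p.1 q.1 + dist p.2 q.2) ^ 2) :=
        Real.sqrt_le_sqrt (by nlinarith)
    _ = dist p.1 q.1 + dist p.2 q.2 := Real.sqrt_sq (by positivity)

/-- If `X` has asymptotic property C and `Y` has finite asymptotic dimension,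
then `X × Y` (ℓ² product metric) has asymptotic property C. -/
theorem apc_prod_finite_asdim {X Y : Type*} [MetricSpace X] [MetricSpace Y]
    (hX : APCD (dist : X → X → ℝ))
    (hY : ∃ n : ℕ, AsdimLE (dist : Y → Y → ℝ) (Set.univ : Set Y) n) :
    APCD (prodDist : X × Y → X × Y → ℝ) := by
  obtain ⟨n, hA⟩ := hY
  intro R
  set R' : ℕ → ℝ := fun i => 1 + ∑ k ∈ Finset.range (n+1), |R ((n+1)*i + k)| with hR'def
  have hsum_nonneg : ∀ i, 0 ≤ ∑ k ∈ Finset.range (n+1), |R ((n+1)*i + k)| :=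
    fun i => Finset.sum_nonneg fun k _ => abs_nonneg _
  have hR'pos : ∀ i, 0 < R' i := by
    intro i
    have := hsum_nonneg i
    simp only [hR'def]
    linarith
  have hR'ge : ∀ i k, k < n+1 → R ((n+1)*i + k) ≤ R' i := by
    intro i k hk
    have h1 : |R ((n+1)*i + k)| ≤ ∑ k ∈ Finset.range (n+1), |R ((n+1)*i + k)| :=
      Finset.single_le_sum (f := fun k => |R ((n+1)*i + k)|)
        (fun _ _ => abs_nonneg _) (Finset.mem_range.2 hk)
    have h2 := le_abs_self (R ((n+1)*i + k))
    simp only [hR'def]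
    linarith
  obtain ⟨m, 𝒰, hcov, hdisj, hbdd⟩ := hX R'
  have hbdd' : ∀ i, ∃ B, i < m → BddFam dist B (𝒰 i) := by
    intro i
    by_cases h : i < m
    · obtain ⟨B, hB⟩ := hbdd i h
      exact ⟨B, fun _ => hB⟩
    · exact ⟨0, fun h' => absurd h' h⟩
  choose BX hBX using hbdd'
  have hAY : ∀ i : ℕ, ∃ B : ℝ, ∃ 𝒱 : Fin (n+1) → Set (Set Y),
      (∀ y : Y, ∃ k, ∃ S ∈ 𝒱 k, y ∈ S) ∧ (∀ k, RDisj dist (R' i) (𝒱 k)) ∧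
      (∀ k, BddFam dist B (𝒱 k)) := by
    intro i
    obtain ⟨B, 𝒱, _, hc, hd, hb⟩ := hA (R' i) (hR'pos i)
    exact ⟨B, 𝒱, fun y => hc y (Set.mem_univ y), hd, hb⟩
  choose BY 𝒱 hYcov hYdisj hYbdd using hAY
  refine ⟨(n+1)*m, fun j =>
    {S | ∃ U ∈ 𝒰 (j/(n+1)), ∃ V ∈ 𝒱 (j/(n+1)) ⟨j % (n+1), Nat.mod_lt _ (Nat.succ_pos n)⟩,
      S = U ×ˢ V}, ?_, ?_, ?_⟩
  · rintro ⟨x, y⟩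
    obtain ⟨i, him, U, hU, hxU⟩ := hcov x
    obtain ⟨k, V, hV, hyV⟩ := hYcov i y
    have hklt := k.isLt
    refine ⟨(n+1)*i + k.val, by nlinarith, U ×ˢ V, ?_, ⟨hxU, hyV⟩⟩
    have hdiv : ((n+1)*i + k.val)/(n+1) = i := by
      rw [Nat.mul_add_div (Nat.succ_pos n), Nat.div_eq_of_lt hklt]
      omega
    have hmod : ((n+1)*i + k.val) % (n+1) = k.val := by
      rw [Nat.mul_add_mod, Nat.mod_eq_of_lt hklt]
    refine ⟨U, by rw [hdiv]; exact hU, V, ?_, rfl⟩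
    have hfin : (⟨((n+1)*i + k.val) % (n+1),
        Nat.mod_lt _ (Nat.succ_pos n)⟩ : Fin (n+1)) = k := Fin.ext hmod
    rw [hdiv, hfin]
    exact hV
  · intro j hj
    rintro A ⟨U, hU, V, hV, rfl⟩ B ⟨U', hU', V', hV', rfl⟩ hne x hx y hy
    obtain ⟨hx1, hx2⟩ := hx
    obtain ⟨hy1, hy2⟩ := hy
    have hi : j/(n+1) < m := Nat.div_lt_of_lt_mul hj
    have hRj : R j ≤ R' (j/(n+1)) := by
      have := hR'ge (j/(n+1)) (j % (n+1)) (Nat.mod_lt _ (Nat.succ_pos n))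
      rwa [Nat.div_add_mod] at this
    by_cases hUU : U = U'
    · by_cases hVV : V = V'
      · exact absurd (by rw [hUU, hVV]) hne
      · have := hYdisj (j/(n+1)) _ V hV V' hV' hVV x.2 hx2 y.2 hy2
        calc R j ≤ R' (j/(n+1)) := hRj
          _ < dist x.2 y.2 := this
          _ ≤ prodDist x y := dist_snd_le_prodDist x y
    · have := hdisj (j/(n+1)) hi U hU U' hU' hUU x.1 hx1 y.1 hy1
      calc R j ≤ R' (j/(n+1)) := hRj
        _ < dist x.1 y.1 := this
        _ ≤ prodDist x y := dist_fst_le_prodDist x y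
  · intro j hj
    have hi : j/(n+1) < m := Nat.div_lt_of_lt_mul hj
    refine ⟨BX (j/(n+1)) + BY (j/(n+1)), ?_⟩
    rintro A ⟨U, hU, V, hV, rfl⟩ x hx y hy
    have h1 := hBX (j/(n+1)) hi U hU x.1 hx.1 y.1 hy.1
    have h2 := hYbdd (j/(n+1)) _ V hV x.2 hx.2 y.2 hy.2
    calc prodDist x y ≤ dist x.1 y.1 + dist x.2 y.2 := prodDist_le_add x y
      _ ≤ _ := add_le_add h1 h2
end

section
/- Let f : X → Y be a uniformly expansive map of metric spaces and n ≥ 0. Then the following are equivalent: (1) for every M > 0 and R > 0 there is B > 0 such that every U ⊆ X with diam f(U) < M can be covered by n+1 R-disjoint families of B-bounded subsets of X; (2) asdim f ≤ n, i.e., every A ⊆ X with asdim f(A) = 0 satisfies asdim A ≤ n. -/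
/-- The map `f` has asymptotic dimension at most `n`: every `A ⊆ X` whose image
has asymptotic dimension `0` satisfies `asdim A ≤ n`. -/
def MapAsdimLE {X Y : Type*} [MetricSpace X] [MetricSpace Y] (f : X → Y) (n : ℕ) : Prop :=
  ∀ A : Set X, AsdimLE (dist : Y → Y → ℝ) (f '' A) 0 →
    AsdimLE (dist : X → X → ℝ) A n

private theorem fwd {X Y : Type*} [MetricSpace X] [MetricSpace Y]
    (f : X → Y) (n : ℕ)
    (ρ : ℝ → ℝ) (hρmono : Monotone ρ) (hρ : ∀ x x' : X, dist (f x) (f x') ≤ ρ (dist x x'))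
    (h1 : ∀ M : ℝ, 0 < M → ∀ R : ℝ, 0 < R → ∃ B : ℝ, 0 < B ∧
        ∀ U : Set X, (∀ x ∈ U, ∀ y ∈ U, dist (f x) (f y) < M) →
          ∃ 𝒰 : Fin (n + 1) → Set (Set X),
            (∀ x ∈ U, ∃ i, ∃ S ∈ 𝒰 i, x ∈ S) ∧
            (∀ i, RDisj (dist : X → X → ℝ) R (𝒰 i)) ∧
            (∀ i, BddFam (dist : X → X → ℝ) B (𝒰 i))) :
    MapAsdimLE f n := by
  intro A hA0 R hR
  set rY : ℝ := max (ρ R) 1 with hrYdef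
  have hrYpos : 0 < rY := lt_of_lt_of_le one_pos (le_max_right _ _)
  obtain ⟨B', 𝒱, h𝒱sub, h𝒱cov, h𝒱disj, h𝒱bdd⟩ := hA0 rY hrYpos
  set M : ℝ := max B' 0 + 1 with hMdef
  have hM : 0 < M := by positivity
  obtain ⟨B, hBpos, hB⟩ := h1 M hM R hR
  have key : ∀ V ∈ 𝒱 0, ∃ 𝒰 : Fin (n+1) → Set (Set X),
      (∀ x ∈ A ∩ f ⁻¹' V, ∃ i, ∃ S ∈ 𝒰 i, x ∈ S) ∧
      (∀ i, RDisj (dist : X → X → ℝ) R (𝒰 i)) ∧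
      (∀ i, BddFam (dist : X → X → ℝ) B (𝒰 i)) := by
    intro V hV
    apply hB
    intro x hx y hy
    calc dist (f x) (f y) ≤ B' := h𝒱bdd 0 V hV (f x) hx.2 (f y) hy.2
      _ ≤ max B' 0 := le_max_left _ _
      _ < M := lt_add_one _
  choose g hgcov hgdisj hgbdd using key
  refine ⟨B, fun i => { T | ∃ V, ∃ hV : V ∈ 𝒱 0, ∃ S ∈ g V hV i, T = S ∩ (A ∩ f ⁻¹' V) },
    ?_, ?_, ?_, ?_⟩
  · rintro i T ⟨V, hV, S, hS, rfl⟩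
    exact fun x hx => hx.2.1
  · intro x hx
    obtain ⟨j, V, hV, hfx⟩ := h𝒱cov (f x) ⟨x, hx, rfl⟩
    have hV0 : V ∈ 𝒱 0 := by rwa [Subsingleton.elim (0 : Fin 1) j]
    obtain ⟨i, S, hS, hxS⟩ := hgcov V hV0 x ⟨hx, hfx⟩
    exact ⟨i, S ∩ (A ∩ f ⁻¹' V), ⟨V, hV0, S, hS, rfl⟩, hxS, hx, hfx⟩
  · rintro i T ⟨V, hV, S, hS, rfl⟩ T' ⟨V', hV', S', hS', rfl⟩ hne x hx y hy
    by_cases hVV : V = V'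
    · subst hVV
      have hSne : S ≠ S' := by
        rintro rfl; exact hne rfl
      exact hgdisj V hV i S hS S' hS' hSne x hx.1 y hy.1
    · have hYd : rY < dist (f x) (f y) :=
        h𝒱disj 0 V hV V' hV' hVV (f x) hx.2.2 (f y) hy.2.2
      by_contra hle
      push_neg at hle
      have : dist (f x) (f y) ≤ ρ R := le_trans (hρ x y) (hρmono hle)
      have : dist (f x) (f y) ≤ rY := le_trans this (le_max_left _ _)
      linarith
  · rintro i T ⟨V, hV, S, hS, rfl⟩ x hx y hy
    exact hgbdd V hV i S hS x hx.1 y hy.1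

private theorem rev {X Y : Type*} [MetricSpace X] [MetricSpace Y]
    (f : X → Y) (n : ℕ) (h2 : MapAsdimLE f n)
    (M : ℝ) (hM : 0 < M) (R : ℝ) (hR : 0 < R) :
    ∃ B : ℝ, 0 < B ∧
        ∀ U : Set X, (∀ x ∈ U, ∀ y ∈ U, dist (f x) (f y) < M) →
          ∃ 𝒰 : Fin (n + 1) → Set (Set X),
            (∀ x ∈ U, ∃ i, ∃ S ∈ 𝒰 i, x ∈ S) ∧
            (∀ i, RDisj (dist : X → X → ℝ) R (𝒰 i)) ∧
            (∀ i, BddFam (dist : X → X → ℝ) B (𝒰 i)) := by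
  by_contra hcon
  have hbad : ∀ B : ℝ, 0 < B → ∃ U : Set X,
      (∀ x ∈ U, ∀ y ∈ U, dist (f x) (f y) < M) ∧
      ¬ ∃ 𝒰 : Fin (n + 1) → Set (Set X),
            (∀ x ∈ U, ∃ i, ∃ S ∈ 𝒰 i, x ∈ S) ∧
            (∀ i, RDisj (dist : X → X → ℝ) R (𝒰 i)) ∧
            (∀ i, BddFam (dist : X → X → ℝ) B (𝒰 i)) := by
    intro B hB
    by_contra h
    push_neg at h
    exact hcon ⟨B, hB, h⟩
  have hU' : ∀ j : ℕ, ∃ U : Set X,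
      (∀ x ∈ U, ∀ y ∈ U, dist (f x) (f y) < M) ∧
      ¬ ∃ 𝒰 : Fin (n + 1) → Set (Set X),
            (∀ x ∈ U, ∃ i, ∃ S ∈ 𝒰 i, x ∈ S) ∧
            (∀ i, RDisj (dist : X → X → ℝ) R (𝒰 i)) ∧
            (∀ i, BddFam (dist : X → X → ℝ) ((j : ℝ) + 1) (𝒰 i)) :=
    fun j => hbad ((j : ℝ) + 1) (by positivity)
  choose U hU1 hU2 using hU'
  -- each bad set is nonempty
  have hne : ∀ j, (U j).Nonempty := by
    intro j
    rw [Set.nonempty_iff_ne_empty]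
    intro hemp
    apply hU2 j
    refine ⟨fun _ => ∅, ?_, ?_, ?_⟩
    · intro x hx; rw [hemp] at hx; exact absurd hx (Set.notMem_empty x)
    · intro i A hA; exact absurd hA (Set.notMem_empty A)
    · intro i A hA; exact absurd hA (Set.notMem_empty A)
  choose x hx using hne
  set y0 : Y := f (x 0) with hy0
  set t : ℕ → ℝ := fun j => dist y0 (f (x j)) with ht
  -- main contradiction machine
  have main : ∀ A : Set X, AsdimLE (dist : Y → Y → ℝ) (f '' A) 0 →
      ∃ BA : ℝ, ∀ j : ℕ, U j ⊆ A → BA ≤ (j : ℝ) + 1 → False := by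
    intro A hA
    obtain ⟨BA, 𝒰, hsub, hcov, hdisj, hbdd⟩ := h2 A hA R hR
    refine ⟨BA, fun j hUA hle => hU2 j ⟨𝒰, ?_, hdisj, ?_⟩⟩
    · intro a ha; exact hcov a (hUA ha)
    · intro i S hS a ha b hb; exact le_trans (hbdd i S hS a ha b hb) hle
  by_cases hbdd : ∃ C : ℝ, ∀ j, t j ≤ C
  · -- bounded case
    obtain ⟨C, hC⟩ := hbdd
    set A : Set X := ⋃ j, U j with hA
    have hA0 : AsdimLE (dist : Y → Y → ℝ) (f '' A) 0 := by
      intro R' hR'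
      refine ⟨2*C + 2*M, fun _ => {f '' A}, ?_, ?_, ?_, ?_⟩
      · intro i S hS; rw [Set.mem_singleton_iff] at hS; rw [hS]
      · intro y hy; exact ⟨0, f '' A, rfl, hy⟩
      · intro i S hS T hT hne'
        rw [Set.mem_singleton_iff] at hS hT
        exact absurd (hS.trans hT.symm) hne'
      · rintro i S hS u hu v hv
        rw [Set.mem_singleton_iff] at hS; subst hS
        obtain ⟨a, ha, rfl⟩ := hu
        obtain ⟨b, hb, rfl⟩ := hv
        obtain ⟨j, haj⟩ := Set.mem_iUnion.mp ha
        obtain ⟨k, hbk⟩ := Set.mem_iUnion.mp hb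
        have h1 : dist (f a) (f (x j)) < M := hU1 j a haj (x j) (hx j)
        have h2 : dist (f b) (f (x k)) < M := hU1 k b hbk (x k) (hx k)
        calc dist (f a) (f b) ≤ dist (f a) y0 + dist y0 (f b) := dist_triangle _ _ _
          _ ≤ (dist (f a) (f (x j)) + dist (f (x j)) y0)
              + (dist y0 (f (x k)) + dist (f (x k)) (f b)) := by
            gcongr <;> [exact dist_triangle _ _ _; exact dist_triangle _ _ _]
          _ ≤ (M + C) + (C + M) := by
            have := hC j; have := hC k
            rw [dist_comm (f (x j)) y0] at *
            rw [dist_comm (f (x k)) (f b)] at *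
            nlinarith [dist_comm (f b) (f (x k))]
          _ = 2*C + 2*M := by ring
    obtain ⟨BA, hBA⟩ := main A hA0
    exact hBA ⌈max BA 0⌉₊ (Set.subset_iUnion U _)
      (by
        have h1 : (max BA 0 : ℝ) ≤ (⌈max BA 0⌉₊ : ℝ) := Nat.le_ceil _
        have := le_max_left BA (0:ℝ)
        linarith)
  · -- unbounded case
    push_neg at hbdd
    have hstr : ∀ (C : ℝ) (N : ℕ), ∃ j, N ≤ j ∧ C < t j := by
      intro C N
      set C' : ℝ := max C 0 + ∑ i ∈ Finset.range N, |t i| with hC'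
      obtain ⟨j, hj⟩ := hbdd C'
      refine ⟨j, ?_, ?_⟩
      · by_contra hlt
        push_neg at hlt
        have : |t j| ≤ ∑ i ∈ Finset.range N, |t i| :=
          Finset.single_le_sum (fun i _ => abs_nonneg (t i)) (Finset.mem_range.mpr hlt)
        have : t j ≤ C' := by
          have h0 : (0:ℝ) ≤ max C 0 := le_max_right _ _
          calc t j ≤ |t j| := le_abs_self _
            _ ≤ C' := by rw [hC']; linarith
        linarith
      · have : C ≤ C' := by
          have hs : (0:ℝ) ≤ ∑ i ∈ Finset.range N, |t i| :=
            Finset.sum_nonneg (fun i _ => abs_nonneg _)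
          calc C ≤ max C 0 := le_max_left _ _
            _ ≤ C' := by rw [hC']; linarith
        linarith
    choose ψ hψ1 hψ2 using hstr
    set φ : ℕ → ℕ := fun k => Nat.rec 0 (fun k prev => ψ (t prev + 2*M + ((k:ℝ)+1)) (prev+1)) k
      with hφ
    have hφsucc : ∀ k, φ (k+1) = ψ (t (φ k) + 2*M + ((k:ℝ)+1)) (φ k + 1) := fun k => rfl
    have hφs : StrictMono φ := by
      apply strictMono_nat_of_lt_succ
      intro k
      rw [hφsucc]
      exact lt_of_lt_of_le (Nat.lt_succ_self _) (hψ1 _ _)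
    have hφt : ∀ k, t (φ k) + 2*M + ((k:ℝ)+1) < t (φ (k+1)) := by
      intro k; rw [hφsucc]; exact hψ2 _ _
    have htmono : StrictMono (fun k => t (φ k)) := by
      apply strictMono_nat_of_lt_succ
      intro k
      have := hφt k
      have : (0:ℝ) ≤ (k:ℝ) := Nat.cast_nonneg k
      linarith [hφt k]
    have htgap : ∀ k l, k < l → t (φ k) + 2*M + (l:ℝ) < t (φ l) := by
      intro k l hkl
      obtain ⟨m, rfl⟩ : ∃ m, l = m + 1 := ⟨l - 1, by omega⟩
      have h1 := hφt m
      rcases Nat.lt_or_ge k m with h | h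
      · have := htmono.monotone (le_of_lt h : k ≤ m)
        push_cast
        linarith
      · have : k = m := by omega
        subst this
        push_cast
        linarith
    -- separation of images
    have hsep : ∀ k l, k < l → ∀ a ∈ U (φ k), ∀ b ∈ U (φ l), (l:ℝ) < dist (f a) (f b) := by
      intro k l hkl a ha b hb
      have h1 : dist y0 (f a) < t (φ k) + M := by
        calc dist y0 (f a) ≤ dist y0 (f (x (φ k))) + dist (f (x (φ k))) (f a) :=
            dist_triangle _ _ _
          _ < t (φ k) + M := by
            have := hU1 (φ k) (x (φ k)) (hx _) a ha
            simp only [ht]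
            linarith
      have h2 : t (φ l) - M < dist y0 (f b) := by
        have h3 : dist y0 (f (x (φ l))) ≤ dist y0 (f b) + dist (f b) (f (x (φ l))) :=
          dist_triangle _ _ _
        have h4 : dist (f b) (f (x (φ l))) < M := hU1 (φ l) b hb (x (φ l)) (hx _)
        simp only [ht] at *
        linarith
      have h5 : dist y0 (f b) ≤ dist y0 (f a) + dist (f a) (f b) := dist_triangle _ _ _
      have h6 := htgap k l hkl
      linarith
    set A : Set X := ⋃ k, U (φ k) with hA
    have hA0 : AsdimLE (dist : Y → Y → ℝ) (f '' A) 0 := by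
      intro R' hR'
      set k0 : ℕ := ⌈R'⌉₊ with hk0
      set W : Set Y := ⋃ k ∈ Finset.range (k0+1), f '' U (φ k) with hW
      refine ⟨2*(t (φ k0) + M) + M,
        fun _ => insert W { S | ∃ l, k0 < l ∧ S = f '' U (φ l) }, ?_, ?_, ?_, ?_⟩
      · intro i S hS
        rcases hS with rfl | ⟨l, hl, rfl⟩
        · intro y hy
          simp only [hW, Set.mem_iUnion] at hy
          obtain ⟨k, hk, a, ha, rfl⟩ := hy
          exact ⟨a, Set.mem_iUnion.mpr ⟨k, ha⟩, rfl⟩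
        · rintro y ⟨a, ha, rfl⟩
          exact ⟨a, Set.mem_iUnion.mpr ⟨l, ha⟩, rfl⟩
      · rintro y ⟨a, ha, rfl⟩
        obtain ⟨k, hak⟩ := Set.mem_iUnion.mp ha
        rcases Nat.lt_or_ge k0 k with h | h
        · exact ⟨0, f '' U (φ k), Set.mem_insert_iff.mpr (Or.inr ⟨k, h, rfl⟩),
            ⟨a, hak, rfl⟩⟩
        · refine ⟨0, W, Set.mem_insert _ _, ?_⟩
          simp only [hW, Set.mem_iUnion]
          exact ⟨k, Finset.mem_range.mpr (by omega), a, hak, rfl⟩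
      · -- R'-disjoint
        intro i S hS T hT hST u hu v hv
        have hk0R : R' ≤ (k0:ℝ) := Nat.le_ceil _
        rcases hS with rfl | ⟨l, hl, rfl⟩ <;> rcases hT with rfl | ⟨l', hl', rfl⟩
        · exact absurd rfl hST
        · -- u ∈ W, v ∈ f '' U (φ l')
          simp only [hW, Set.mem_iUnion] at hu
          obtain ⟨k, hk, a, ha, rfl⟩ := hu
          obtain ⟨b, hb, rfl⟩ := hv
          have hkl : k < l' := by
            have := Finset.mem_range.mp hk; omega
          have := hsep k l' hkl a ha b hb
          have : R' < (l':ℝ) := by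
            have : (k0:ℝ) < (l':ℝ) := by exact_mod_cast hl'
            linarith
          linarith [hsep k l' hkl a ha b hb]
        · -- u ∈ f '' U (φ l), v ∈ W
          simp only [hW, Set.mem_iUnion] at hv
          obtain ⟨k, hk, b, hb, rfl⟩ := hv
          obtain ⟨a, ha, rfl⟩ := hu
          have hkl : k < l := by
            have := Finset.mem_range.mp hk; omega
          have h := hsep k l hkl b hb a ha
          rw [dist_comm] at h
          have : R' < (l:ℝ) := by
            have : (k0:ℝ) < (l:ℝ) := by exact_mod_cast hl
            linarith
          linarith
        · -- both tails
          have hll' : l ≠ l' := by rintro rfl; exact hST rfl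
          obtain ⟨a, ha, rfl⟩ := hu
          obtain ⟨b, hb, rfl⟩ := hv
          rcases Nat.lt_or_ge l l' with h | h
          · have := hsep l l' h a ha b hb
            have : R' < (l':ℝ) := by
              have : (k0:ℝ) < (l':ℝ) := by exact_mod_cast hl'
              linarith
            linarith [hsep l l' h a ha b hb]
          · have hl'l : l' < l := by omega
            have hd := hsep l' l hl'l b hb a ha
            rw [dist_comm] at hd
            have : R' < (l:ℝ) := by
              have : (k0:ℝ) < (l:ℝ) := by exact_mod_cast hl
              linarith
            linarith
      · -- bounded
        intro i S hS u hu v hv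
        have htnn : 0 ≤ t (φ k0) := dist_nonneg
        rcases hS with rfl | ⟨l, hl, rfl⟩
        · simp only [hW, Set.mem_iUnion] at hu hv
          obtain ⟨k, hk, a, ha, rfl⟩ := hu
          obtain ⟨k', hk', b, hb, rfl⟩ := hv
          have hb1 : dist y0 (f a) < t (φ k) + M := by
            calc dist y0 (f a) ≤ dist y0 (f (x (φ k))) + dist (f (x (φ k))) (f a) :=
                dist_triangle _ _ _
              _ < t (φ k) + M := by
                have := hU1 (φ k) (x (φ k)) (hx _) a ha
                simp only [ht]; linarith
          have hb2 : dist y0 (f b) < t (φ k') + M := by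
            calc dist y0 (f b) ≤ dist y0 (f (x (φ k'))) + dist (f (x (φ k'))) (f b) :=
                dist_triangle _ _ _
              _ < t (φ k') + M := by
                have := hU1 (φ k') (x (φ k')) (hx _) b hb
                simp only [ht]; linarith
          have hm1 : t (φ k) ≤ t (φ k0) :=
            htmono.monotone (by have := Finset.mem_range.mp hk; omega)
          have hm2 : t (φ k') ≤ t (φ k0) :=
            htmono.monotone (by have := Finset.mem_range.mp hk'; omega)
          calc dist (f a) (f b) ≤ dist (f a) y0 + dist y0 (f b) := dist_triangle _ _ _
            _ ≤ 2*(t (φ k0) + M) + M := by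
              rw [dist_comm (f a) y0]
              linarith
        · obtain ⟨a, ha, rfl⟩ := hu
          obtain ⟨b, hb, rfl⟩ := hv
          have := hU1 (φ l) a ha b hb
          linarith
    obtain ⟨BA, hBA⟩ := main A hA0
    set k : ℕ := ⌈max BA 0⌉₊ with hk
    refine hBA (φ k) (Set.subset_iUnion (fun k => U (φ k)) k) ?_
    have h1 : (max BA 0 : ℝ) ≤ (k : ℝ) := Nat.le_ceil _
    have h2 : (k : ℝ) ≤ (φ k : ℝ) := by exact_mod_cast hφs.le_apply
    have := le_max_left BA (0:ℝ)
    linarith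

/-- For a uniformly expansive map `f : X → Y`, having uniform covers of sets with
image of diameter `< M` is equivalent to `asdim f ≤ n`. -/
theorem asdim_map_characterization {X Y : Type*} [MetricSpace X] [MetricSpace Y]
    (f : X → Y) (n : ℕ)
    (hexp : ∃ ρ : ℝ → ℝ, Monotone ρ ∧ ∀ x x' : X, dist (f x) (f x') ≤ ρ (dist x x')) :
    (∀ M : ℝ, 0 < M → ∀ R : ℝ, 0 < R → ∃ B : ℝ, 0 < B ∧
        ∀ U : Set X, (∀ x ∈ U, ∀ y ∈ U, dist (f x) (f y) < M) →
          ∃ 𝒰 : Fin (n + 1) → Set (Set X),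
            (∀ x ∈ U, ∃ i, ∃ S ∈ 𝒰 i, x ∈ S) ∧
            (∀ i, RDisj (dist : X → X → ℝ) R (𝒰 i)) ∧
            (∀ i, BddFam (dist : X → X → ℝ) B (𝒰 i)))
    ↔ MapAsdimLE f n := by
  obtain ⟨ρ, hρmono, hρ⟩ := hexp
  constructor
  · exact fwd f n ρ hρmono hρ
  · intro h2 M hM R hR
    exact rev f n h2 M hM R hR
end

section
/- If f : X → Y is uniformly expansive, coarsely surjective, has finite asymptotic dimension asdim f ≤ n, and Y has asymptotic property C, then X has asymptotic property C. -/
section Helpers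
variable {α : Type*}

/-- Restrict a system of families covering `A` to a subset `B`. -/
lemma restrict_fam (d : α → α → ℝ) {A B : Set α} (hBA : B ⊆ A) {m : ℕ} {Bb r : ℝ}
    (𝒰 : Fin m → Set (Set α))
    (hcov : ∀ x ∈ A, ∃ i, ∃ S ∈ 𝒰 i, x ∈ S)
    (hdis : ∀ i, RDisj d r (𝒰 i))
    (hbdd : ∀ i, BddFam d Bb (𝒰 i)) :
    ∃ 𝒰' : Fin m → Set (Set α),
      (∀ i, ∀ S ∈ 𝒰' i, S ⊆ B) ∧
      (∀ x ∈ B, ∃ i, ∃ S ∈ 𝒰' i, x ∈ S) ∧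
      (∀ i, RDisj d r (𝒰' i)) ∧
      (∀ i, BddFam d Bb (𝒰' i)) := by
  refine ⟨fun i => (· ∩ B) '' 𝒰 i, ?_, ?_, ?_, ?_⟩
  · rintro i S ⟨T, hT, rfl⟩
    exact Set.inter_subset_right
  · intro x hx
    obtain ⟨i, S, hS, hxS⟩ := hcov x (hBA hx)
    exact ⟨i, S ∩ B, ⟨S, hS, rfl⟩, hxS, hx⟩
  · rintro i S ⟨S₀, hS₀, rfl⟩ T ⟨T₀, hT₀, rfl⟩ hne x hx y hy
    have hST : S₀ ≠ T₀ := by rintro rfl; exact hne rfl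
    exact hdis i S₀ hS₀ T₀ hT₀ hST x hx.1 y hy.1
  · rintro i S ⟨S₀, hS₀, rfl⟩ x hx y hy
    exact hbdd i S₀ hS₀ x hx.1 y hy.1

lemma asdimLE_subset (d : α → α → ℝ) {A B : Set α} {k : ℕ}
    (h : AsdimLE d A k) (hBA : B ⊆ A) : AsdimLE d B k := by
  intro R hR
  obtain ⟨Bb, 𝒰, hsub, hcov, hdis, hbdd⟩ := h R hR
  obtain ⟨𝒰', h1, h2, h3, h4⟩ := restrict_fam d hBA 𝒰 hcov hdis hbdd
  exact ⟨Bb, 𝒰', h1, h2, h3, h4⟩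

lemma asdimLE_zero_of_bdd (d : α → α → ℝ) {A : Set α} {C : ℝ}
    (h : ∀ x ∈ A, ∀ y ∈ A, d x y ≤ C) : AsdimLE d A 0 := by
  intro R hR
  refine ⟨C, fun _ => {A}, ?_, ?_, ?_, ?_⟩
  · intro i S hS
    rw [Set.mem_singleton_iff] at hS; subst hS; exact subset_rfl
  · intro x hx
    exact ⟨0, A, rfl, hx⟩
  · intro i S hS T hT hne
    rw [Set.mem_singleton_iff] at hS hT
    subst hS; subst hT; exact absurd rfl hne
  · intro i S hS
    rw [Set.mem_singleton_iff] at hS; subst hS; exact h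

end Helpers

/-- `f⁻¹(V)` admits an `(n+1)`-colored, `r`-disjoint, `B`-bounded cover. -/
def GoodCover {X Y : Type*} [MetricSpace X] [MetricSpace Y]
    (f : X → Y) (n : ℕ) (r : ℝ) (V : Set Y) (B : ℝ) : Prop :=
  ∃ 𝒲 : Fin (n + 1) → Set (Set X),
    (∀ j, ∀ S ∈ 𝒲 j, S ⊆ f ⁻¹' V) ∧
    (∀ x ∈ f ⁻¹' V, ∃ j, ∃ S ∈ 𝒲 j, x ∈ S) ∧
    (∀ j, RDisj dist r (𝒲 j)) ∧
    (∀ j, BddFam dist B (𝒲 j))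

section GoodCoverFacts
variable {X Y : Type*} [MetricSpace X] [MetricSpace Y] (f : X → Y) (n : ℕ)

lemma goodCover_mono {r B B' : ℝ} {V : Set Y} (hBB : B ≤ B')
    (h : GoodCover f n r V B) : GoodCover f n r V B' := by
  obtain ⟨𝒲, h1, h2, h3, h4⟩ := h
  exact ⟨𝒲, h1, h2, h3, fun j S hS x hx y hy => le_trans (h4 j S hS x hx y hy) hBB⟩

lemma goodCover_of_empty {r B : ℝ} {V : Set Y} (h : f ⁻¹' V = ∅) :
    GoodCover f n r V B := by
  refine ⟨fun _ => ∅, ?_, ?_, ?_, ?_⟩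
  · intro j S hS; exact absurd hS (Set.notMem_empty S)
  · intro x hx; rw [h] at hx; exact absurd hx (Set.notMem_empty x)
  · intro j S hS; exact absurd hS (Set.notMem_empty S)
  · intro j S hS; exact absurd hS (Set.notMem_empty S)

lemma nonempty_of_not_goodCover {r B : ℝ} {V : Set Y}
    (h : ¬ GoodCover f n r V B) : ∃ x : X, f x ∈ V := by
  by_contra hemp
  apply h
  apply goodCover_of_empty
  rw [Set.eq_empty_iff_forall_notMem]
  intro x hx
  exact hemp ⟨x, hx⟩

lemma goodCover_of_asdim {r B : ℝ} {U V : Set Y} (hVU : V ⊆ U)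
    (𝒰 : Fin (n + 1) → Set (Set X))
    (hcov : ∀ x ∈ f ⁻¹' U, ∃ i, ∃ S ∈ 𝒰 i, x ∈ S)
    (hdis : ∀ i, RDisj dist r (𝒰 i))
    (hbdd : ∀ i, BddFam dist B (𝒰 i)) :
    GoodCover f n r V B := by
  obtain ⟨𝒰', h1, h2, h3, h4⟩ :=
    restrict_fam dist (Set.preimage_mono hVU) 𝒰 hcov hdis hbdd
  exact ⟨𝒰', h1, h2, h3, h4⟩

end GoodCoverFacts

/-- Auxiliary recursion: running maximum used in the sparse-sequence construction. -/
def seqM (Bof : ℝ → ℝ) (D : ℝ → ℝ) : ℕ → ℝ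
  | 0 => 0
  | k + 1 => seqM Bof D k ⊔ D ((k : ℝ) ⊔ Bof ((k : ℝ) + seqM Bof D k))

/-- Uniformization: if `asdim f ≤ n` then preimages of members of a uniformly
bounded family admit covers with a uniform bound. -/
lemma uniformize {X Y : Type*} [MetricSpace X] [MetricSpace Y]
    (f : X → Y) (n : ℕ) (hf : MapAsdimLE f n) (r B₀ : ℝ) (hr : 0 < r)
    (𝒱 : Set (Set Y)) (hb : BddFam dist B₀ 𝒱) :
    ∃ B : ℝ, ∀ V ∈ 𝒱, GoodCover f n r V B := by
  by_contra hcon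
  push_neg at hcon
  -- choose counterexamples at every level
  choose Vf hVf hnP using hcon
  have hxe : ∀ B : ℝ, ∃ x : X, f x ∈ Vf B := fun B => nonempty_of_not_goodCover f n (hnP B)
  choose xf hxf using hxe
  set c : Y := f (xf 0) with hc
  have hB₀' : (0:ℝ) ≤ B₀ ⊔ 0 := le_sup_right
  set B₀' : ℝ := B₀ ⊔ 0 with hB₀'def
  have hbV : ∀ V ∈ 𝒱, ∀ x ∈ V, ∀ y ∈ V, dist x y ≤ B₀' :=
    fun V hV x hx y hy => le_trans (hb V hV x hx y hy) le_sup_left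
  by_cases hC2 : ∀ Rad : ℝ, ∃ B : ℝ, ∀ V ∈ 𝒱, ¬ GoodCover f n r V B → ∀ y ∈ V, Rad < dist y c
  · -- counterexamples escape every ball: build a sparse sequence
    choose Bof hBof using hC2
    set M : ℕ → ℝ := seqM Bof (fun B => dist (f (xf B)) c) with hM
    set Bk : ℕ → ℝ := fun k => (k : ℝ) ⊔ Bof ((k : ℝ) + M k) with hBk
    set Vk : ℕ → Set Y := fun k => Vf (Bk k) with hVk
    set yk : ℕ → Y := fun k => f (xf (Bk k)) with hyk
    have hMsucc : ∀ k, M (k + 1) = M k ⊔ dist (yk k) c := fun k => rfl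
    have hMmono : Monotone M := monotone_nat_of_le_succ (fun k => by rw [hMsucc]; exact le_sup_left)
    have hyM : ∀ k, dist (yk k) c ≤ M (k + 1) := fun k => by rw [hMsucc]; exact le_sup_right
    have hykV : ∀ k, yk k ∈ Vk k := fun k => hxf (Bk k)
    have hVk𝒱 : ∀ k, Vk k ∈ 𝒱 := fun k => hVf (Bk k)
    have hkBk : ∀ k : ℕ, (k : ℝ) ≤ Bk k := fun k => le_sup_left
    have hnPk : ∀ k, ¬ GoodCover f n r (Vk k) (Bk k) := fun k => hnP (Bk k)
    have hky : ∀ k : ℕ, (k : ℝ) + M k < dist (yk k) c := by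
      intro k
      have h1 : ¬ GoodCover f n r (Vk k) (Bof ((k : ℝ) + M k)) := by
        intro hg
        exact hnPk k (goodCover_mono f n (le_sup_right) hg)
      exact hBof ((k : ℝ) + M k) (Vk k) (hVk𝒱 k) h1 (yk k) (hykV k)
    have hsep : ∀ i k : ℕ, i < k → (k : ℝ) < dist (yk i) (yk k) := by
      intro i k hik
      have h1 : dist (yk k) c ≤ dist (yk i) (yk k) + dist (yk i) c := by
        rw [dist_comm (yk i) (yk k)]
        exact dist_triangle _ _ _
      have h2 := hky k
      have h3 : dist (yk i) c ≤ M (i + 1) := hyM i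
      have h4 : M (i + 1) ≤ M k := hMmono hik
      have h5 : (0:ℝ) ≤ M k := by
        have : M 0 ≤ M k := hMmono (Nat.zero_le k)
        simpa [hM, seqM] using this
      linarith
    set U : Set Y := ⋃ k, Vk k with hU
    have hVkU : ∀ k, Vk k ⊆ U := fun k => Set.subset_iUnion Vk k
    -- U has asymptotic dimension 0
    have hU0 : AsdimLE (dist : Y → Y → ℝ) U 0 := by
      intro R hR
      obtain ⟨K, hK⟩ := exists_nat_gt (R + 2 * B₀')
      set L : Set Y := ⋃ k, ⋃ (_ : k < K), Vk k with hL
      have hmemL : ∀ y, y ∈ L ↔ ∃ k, k < K ∧ y ∈ Vk k := by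
        intro y; simp [hL]
      -- the far members are pairwise far apart; key distance estimate
      have hfar : ∀ i k : ℕ, i < k → (K:ℝ) ≤ (k:ℝ) →
          ∀ x ∈ Vk i, ∀ y ∈ Vk k, R < dist x y := by
        intro i k hik hKk x hx y hy
        have h1 : dist (yk i) (yk k) ≤ dist (yk i) x + dist x y + dist y (yk k) := by
          calc dist (yk i) (yk k) ≤ dist (yk i) y + dist y (yk k) := dist_triangle _ _ _
            _ ≤ dist (yk i) x + dist x y + dist y (yk k) := by
                have := dist_triangle (yk i) x y
                linarith
        have h2 : dist (yk i) x ≤ B₀' := hbV _ (hVk𝒱 i) _ (hykV i) _ hx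
        have h3 : dist y (yk k) ≤ B₀' := hbV _ (hVk𝒱 k) _ hy _ (hykV k)
        have h4 := hsep i k hik
        linarith
      refine ⟨B₀' ⊔ (2 * B₀' + 2 * M K),
        fun _ => insert L {S | ∃ k, K ≤ k ∧ S = Vk k}, ?_, ?_, ?_, ?_⟩
      · intro i S hS
        rcases Set.mem_insert_iff.mp hS with h | h
        · subst h
          intro y hy
          obtain ⟨k, _, hk⟩ := (hmemL y).mp hy
          exact hVkU k hk
        · obtain ⟨k, _, rfl⟩ := h
          exact hVkU k
      · intro y hy
        obtain ⟨k, hk⟩ := Set.mem_iUnion.mp hy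
        by_cases hkK : k < K
        · exact ⟨0, L, Set.mem_insert _ _, (hmemL y).mpr ⟨k, hkK, hk⟩⟩
        · exact ⟨0, Vk k, Set.mem_insert_iff.mpr (Or.inr ⟨k, le_of_not_gt hkK, rfl⟩), hk⟩
      · intro i A hA B hB hne x hx y hy
        rcases Set.mem_insert_iff.mp hA with hA' | hA' <;>
          rcases Set.mem_insert_iff.mp hB with hB' | hB'
        · exact absurd (hA'.trans hB'.symm) hne
        · subst hA'
          obtain ⟨k, hKk, rfl⟩ := hB'
          obtain ⟨i', hi'K, hxi'⟩ := (hmemL x).mp hx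
          have hik : i' < k := lt_of_lt_of_le hi'K hKk
          exact hfar i' k hik (by exact_mod_cast hKk) x hxi' y hy
        · subst hB'
          obtain ⟨k, hKk, rfl⟩ := hA'
          obtain ⟨i', hi'K, hyi'⟩ := (hmemL y).mp hy
          have hik : i' < k := lt_of_lt_of_le hi'K hKk
          have := hfar i' k hik (by exact_mod_cast hKk) y hyi' x hx
          rwa [dist_comm] at this
        · obtain ⟨k₁, hK1, rfl⟩ := hA'
          obtain ⟨k₂, hK2, rfl⟩ := hB'
          have hk12 : k₁ ≠ k₂ := by rintro rfl; exact hne rfl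
          rcases lt_or_gt_of_ne hk12 with h | h
          · exact hfar k₁ k₂ h (by exact_mod_cast hK2) x hx y hy
          · have := hfar k₂ k₁ h (by exact_mod_cast hK1) y hy x hx
            rwa [dist_comm] at this
      · intro i A hA x hx y hy
        rcases Set.mem_insert_iff.mp hA with hA' | hA'
        · subst hA'
          obtain ⟨k₁, hk1, hx1⟩ := (hmemL x).mp hx
          obtain ⟨k₂, hk2, hy2⟩ := (hmemL y).mp hy
          have e1 : dist x (yk k₁) ≤ B₀' := hbV _ (hVk𝒱 k₁) _ hx1 _ (hykV k₁)
          have e2 : dist (yk k₁) c ≤ M K := le_trans (hyM k₁) (hMmono hk1)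
          have e3 : dist (yk k₂) c ≤ M K := le_trans (hyM k₂) (hMmono hk2)
          have e4 : dist (yk k₂) y ≤ B₀' := hbV _ (hVk𝒱 k₂) _ (hykV k₂) _ hy2
          have h1 : dist x y ≤ dist x (yk k₁) + dist (yk k₁) c + dist c (yk k₂) + dist (yk k₂) y := by
            have t1 := dist_triangle x (yk k₂) y
            have t2 := dist_triangle x c (yk k₂)
            have t3 := dist_triangle x (yk k₁) c
            linarith
          have : dist x y ≤ 2 * B₀' + 2 * M K := by
            rw [dist_comm c (yk k₂)] at h1
            linarith
          exact le_trans this le_sup_right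
        · obtain ⟨k, _, rfl⟩ := hA'
          exact le_trans (hbV _ (hVk𝒱 k) _ hx _ hy) le_sup_left
    -- derive the contradiction
    have hW : AsdimLE (dist : Y → Y → ℝ) (f '' (f ⁻¹' U)) 0 :=
      asdimLE_subset dist hU0 (Set.image_preimage_subset f U)
    obtain ⟨Bs, 𝒰, hsub, hcov, hdis, hbdd⟩ := hf (f ⁻¹' U) hW r hr
    obtain ⟨k, hk⟩ := exists_nat_ge Bs
    have hg : GoodCover f n r (Vk k) Bs :=
      goodCover_of_asdim f n (hVkU k) 𝒰 hcov hdis hbdd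
    exact hnPk k (goodCover_mono f n (le_trans hk (hkBk k)) hg)
  · -- counterexamples accumulate in a ball
    push_neg at hC2
    obtain ⟨Rad, hRad⟩ := hC2
    set U : Set Y := {y | ∃ V, V ∈ 𝒱 ∧ (∃ z ∈ V, dist z c ≤ Rad) ∧ y ∈ V} with hUdef
    have hU0 : AsdimLE (dist : Y → Y → ℝ) U 0 := by
      apply asdimLE_zero_of_bdd (C := 2 * B₀' + 2 * Rad)
      rintro x ⟨V₁, hV₁, ⟨z₁, hz₁, hz₁c⟩, hxV₁⟩ y ⟨V₂, hV₂, ⟨z₂, hz₂, hz₂c⟩, hyV₂⟩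
      have e1 : dist x z₁ ≤ B₀' := hbV _ hV₁ _ hxV₁ _ hz₁
      have e2 : dist z₂ y ≤ B₀' := hbV _ hV₂ _ hz₂ _ hyV₂
      have t1 := dist_triangle x z₂ y
      have t2 := dist_triangle x c z₂
      have t3 := dist_triangle x z₁ c
      have hcz : dist c z₂ = dist z₂ c := dist_comm _ _
      linarith
    have hW : AsdimLE (dist : Y → Y → ℝ) (f '' (f ⁻¹' U)) 0 :=
      asdimLE_subset dist hU0 (Set.image_preimage_subset f U)
    obtain ⟨Bs, 𝒰, hsub, hcov, hdis, hbdd⟩ := hf (f ⁻¹' U) hW r hr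
    obtain ⟨V, hV𝒱, hnG, z, hzV, hzc⟩ := hRad Bs
    have hVU : V ⊆ U := fun y hy => ⟨V, hV𝒱, ⟨z, hzV, hzc⟩, hy⟩
    exact hnG (goodCover_of_asdim f n hVU 𝒰 hcov hdis hbdd)

/-- If `f : X → Y` is uniformly expansive, coarsely surjective, of finite
asymptotic dimension `asdim f ≤ n`, and `Y` has asymptotic property C, then
`X` has asymptotic property C. -/
theorem apc_of_asdim_map {X Y : Type*} [MetricSpace X] [MetricSpace Y]
    (f : X → Y) (n : ℕ)
    (hexp : ∃ ρ : ℝ → ℝ, Monotone ρ ∧ ∀ x x' : X, dist (f x) (f x') ≤ ρ (dist x x'))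
    (hsurj : ∃ R : ℝ, ∀ y : Y, ∃ x : X, dist y (f x) < R)
    (hf : MapAsdimLE f n)
    (hY : APCD (dist : Y → Y → ℝ)) :
    APCD (dist : X → X → ℝ) := by
  obtain ⟨ρ, hρmono, hρ⟩ := hexp
  intro R
  -- the scales we shall need in each block
  set rb : ℕ → ℝ := fun k => 1 + ∑ i ∈ Finset.range ((k + 1) * (n + 1)), |R i| with hrb
  have hrbpos : ∀ k, 0 < rb k := by
    intro k
    have : (0:ℝ) ≤ ∑ i ∈ Finset.range ((k + 1) * (n + 1)), |R i| :=
      Finset.sum_nonneg fun i _ => abs_nonneg _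
    simp only [hrb]; linarith
  have hRrb : ∀ i k : ℕ, i < (k + 1) * (n + 1) → R i ≤ rb k := by
    intro i k hi
    have h1 : |R i| ≤ ∑ t ∈ Finset.range ((k + 1) * (n + 1)), |R t| :=
      Finset.single_le_sum (fun t _ => abs_nonneg (R t)) (Finset.mem_range.mpr hi)
    have h2 : R i ≤ |R i| := le_abs_self _
    simp only [hrb]; linarith
  -- apply property C of Y
  obtain ⟨m, 𝒱, hcovY, hdisY, hbddY⟩ := hY (fun k => ρ (rb k))
  choose BY hBY using hbddY
  have huni : ∀ k, k < m → ∃ B : ℝ, ∀ V ∈ 𝒱 k, GoodCover f n (rb k) V B :=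
    fun k hk => uniformize f n hf (rb k) (BY k hk) (hrbpos k) (𝒱 k) (hBY k hk)
  choose BU hBU using huni
  choose W hW using fun k hk V hV => hBU k hk V hV
  -- the combined families in X
  set 𝒰' : ℕ → ℕ → Set (Set X) := fun k j =>
    {S | ∃ hk : k < m, ∃ hj : j < n + 1, ∃ V, ∃ hV : V ∈ 𝒱 k,
      S ∈ W k hk V hV ⟨j, hj⟩} with h𝒰'
  refine ⟨m * (n + 1), fun i => 𝒰' (i / (n + 1)) (i % (n + 1)), ?_, ?_, ?_⟩
  · -- covering
    intro x
    obtain ⟨k, hk, V, hV, hxV⟩ := hcovY (f x)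
    obtain ⟨j, S, hS, hxS⟩ := (hW k hk V hV).2.1 x (Set.mem_preimage.mpr hxV)
    refine ⟨(n + 1) * k + (j : ℕ), ?_, S, ?_, hxS⟩
    · calc (n + 1) * k + (j : ℕ) < (n + 1) * k + (n + 1) := by
            exact Nat.add_lt_add_left j.isLt _
        _ = (n + 1) * (k + 1) := by ring
        _ ≤ (n + 1) * m := Nat.mul_le_mul_left _ (Nat.succ_le_of_lt hk)
        _ = m * (n + 1) := Nat.mul_comm _ _
    · have hd : ((n + 1) * k + (j : ℕ)) / (n + 1) = k := by
        rw [Nat.mul_add_div (Nat.succ_pos n), Nat.div_eq_of_lt j.isLt, Nat.add_zero]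
      have hm : ((n + 1) * k + (j : ℕ)) % (n + 1) = (j : ℕ) := by
        rw [Nat.mul_add_mod, Nat.mod_eq_of_lt j.isLt]
      simp only [hd, hm]
      exact ⟨hk, j.isLt, V, hV, hS⟩
  · -- disjointness
    intro i hi S hS T hT hne x hx y hy
    obtain ⟨hk, hj, V, hV, hSW⟩ := hS
    obtain ⟨hk', hj', V', hV', hTW⟩ := hT
    set k := i / (n + 1) with hkdef
    have hiRi : R i ≤ rb k := by
      apply hRrb
      have h1 : (n + 1) * (i / (n + 1)) + i % (n + 1) = i := Nat.div_add_mod i (n + 1)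
      have h2 : i % (n + 1) < n + 1 := Nat.mod_lt _ (Nat.succ_pos n)
      calc i = (n + 1) * k + i % (n + 1) := h1.symm
        _ < (n + 1) * k + (n + 1) := Nat.add_lt_add_left h2 _
        _ = (k + 1) * (n + 1) := by ring
    by_cases hVV : V = V'
    · subst hVV
      have hTW' : T ∈ W k hk V hV ⟨i % (n + 1), hj⟩ := hTW
      have := (hW k hk V hV).2.2.1 ⟨i % (n + 1), hj⟩ S hSW T hTW' hne x hx y hy
      exact lt_of_le_of_lt hiRi this
    · have hfx : f x ∈ V := (hW k hk V hV).1 _ S hSW hx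
      have hfy : f y ∈ V' := (hW k hk' V' hV').1 _ T hTW hy
      have h1 : ρ (rb k) < dist (f x) (f y) :=
        hdisY k hk V hV V' hV' hVV (f x) hfx (f y) hfy
      have h2 : dist (f x) (f y) ≤ ρ (dist x y) := hρ x y
      have h3 : rb k < dist x y := by
        by_contra hle
        push_neg at hle
        have := hρmono hle
        linarith
      linarith
  · -- uniform boundedness
    intro i hi
    have hk : i / (n + 1) < m := (Nat.div_lt_iff_lt_mul (Nat.succ_pos n)).mpr hi
    refine ⟨BU (i / (n + 1)) hk, ?_⟩
    intro A hA x hx y hy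
    obtain ⟨hk', hj, V, hV, hAW⟩ := hA
    exact (hW _ hk' V hV).2.2.2 ⟨i % (n + 1), hj⟩ A hAW x hx y hy
end

section
/- Let G be a countable group with a proper left-invariant metric acting by isometries on a metric space X, let x₀ ∈ X, and define φ : G → X by φ(g) = g·x₀. Fix n and suppose that for every R > 0 the R-stabilizer W_R(x₀) = {g ∈ G : d(g·x₀, x₀) ≤ R} has asymptotic dimension at most n. Then the coarse fibers of φ have uniform asymptotic property C. -/
/-- If a countable group `G` with a proper left-invariant metric acts by
isometries on `X` and all `R`-stabilizers of `x₀` have asymptotic dimension at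
most `n`, then the coarse fibers of the orbit map `g ↦ g • x₀` have uniform
asymptotic property C. -/
theorem coarse_fibers_of_orbit_map {G X : Type*} [Group G] [Countable G]
    [MetricSpace G] [MetricSpace X] [MulAction G X]
    (hinv : ∀ g h h' : G, dist (g * h) (g * h') = dist h h')
    (hproper : ∀ r : ℝ, {g : G | dist g (1 : G) ≤ r}.Finite)
    (hiso : ∀ g : G, Isometry (fun x : X => g • x))
    (x₀ : X) (n : ℕ)
    (hW : ∀ R : ℝ, 0 < R →
      AsdimLE (dist : G → G → ℝ) {g : G | dist (g • x₀) x₀ ≤ R} n) :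
    CoarseFibersUAPC (dist : G → G → ℝ) (dist : X → X → ℝ)
      (fun g : G => g • x₀) := by
  intro R
  refine ⟨n + 1, fun M => ?_⟩
  by_cases hM : 0 < M
  · set R' : ℝ := 1 + ∑ i ∈ Finset.range (n + 1), |R i| with hR'def
    have hR'pos : 0 < R' := by positivity
    have hRle : ∀ i : Fin (n + 1), R i.1 < R' := by
      intro i
      have h1 : |R i.1| ≤ ∑ j ∈ Finset.range (n + 1), |R j| :=
        Finset.single_le_sum (fun j _ => abs_nonneg (R j))
          (Finset.mem_range.mpr i.2)
      have := le_abs_self (R i.1)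
      linarith
    obtain ⟨B, 𝒰, h𝒰sub, h𝒰cov, h𝒰disj, h𝒰bdd⟩ := hW M hM R' hR'pos
    refine ⟨B, fun A hA => ?_⟩
    by_cases hAne : A.Nonempty
    · obtain ⟨g₀, hg₀⟩ := hAne
      refine ⟨fun i => {T | ∃ S ∈ 𝒰 i, T = ((g₀ * ·) '' S) ∩ A}, ?_, ?_, ?_, ?_⟩
      · rintro i T ⟨S, -, rfl⟩
        exact Set.inter_subset_right
      · intro g hg
        have hmem : g₀⁻¹ * g ∈ {h : G | dist (h • x₀) x₀ ≤ M} := by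
          have h1 : (g₀⁻¹ * g) • x₀ = g₀⁻¹ • (g • x₀) := by
            rw [smul_smul]
          have h2 : x₀ = g₀⁻¹ • (g₀ • x₀) := by
            rw [smul_smul, inv_mul_cancel, one_smul]
          have h3 : dist ((g₀⁻¹ * g) • x₀) x₀
              = dist (g • x₀) (g₀ • x₀) := by
            rw [h1]; nth_rewrite 2 [h2]
            exact (hiso g₀⁻¹).dist_eq _ _
          have := hA g hg g₀ hg₀
          simp only [Set.mem_setOf_eq]
          rw [h3]
          exact le_of_lt this
        obtain ⟨i, S, hS, hgS⟩ := h𝒰cov _ hmem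
        refine ⟨i, _, ⟨S, hS, rfl⟩, ?_, hg⟩
        exact ⟨g₀⁻¹ * g, hgS, by group⟩
      · rintro i T ⟨S, hS, rfl⟩ T' ⟨S', hS', rfl⟩ hTT' x hx y hy
        have hSS' : S ≠ S' := fun h => hTT' (by rw [h])
        obtain ⟨⟨s, hs, rfl⟩, -⟩ := hx
        obtain ⟨⟨s', hs', rfl⟩, -⟩ := hy
        have := h𝒰disj i S hS S' hS' hSS' s hs s' hs'
        have hd : dist (g₀ * s) (g₀ * s') = dist s s' := hinv g₀ s s'
        have := hRle i
        simp only at hd ⊢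
        linarith
      · rintro i T ⟨S, hS, rfl⟩ x hx y hy
        obtain ⟨⟨s, hs, rfl⟩, -⟩ := hx
        obtain ⟨⟨s', hs', rfl⟩, -⟩ := hy
        have := h𝒰bdd i S hS s hs s' hs'
        have hd : dist (g₀ * s) (g₀ * s') = dist s s' := hinv g₀ s s'
        simp only at hd ⊢
        linarith
    · refine ⟨fun _ => ∅, by simp, ?_, by simp [RDisj], by simp [BddFam]⟩
      intro x hx
      exact absurd ⟨x, hx⟩ hAne
  · refine ⟨0, fun A hA => ?_⟩
    refine ⟨fun _ => ∅, by simp, ?_, by simp [RDisj], by simp [BddFam]⟩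
    intro x hx
    have h0 := hA x hx x hx
    simp only [dist_self] at h0
    exact absurd h0 hM
end

section
/- Let G be a countable group with a proper left-invariant metric acting by isometries on a metric space X with asymptotic property C, and let x₀ ∈ X. If for every R > 0 the R-stabilizer W_R(x₀) has asymptotic dimension at most n (for some fixed n), then G has asymptotic property C. -/
private def QQ (R : ℕ → ℝ) (k : ℕ) : ℝ := 1 + ∑ j ∈ Finset.range (k+1), |R j|

private lemma QQ_pos (R : ℕ → ℝ) (k : ℕ) : 0 < QQ R k := by
  have : 0 ≤ ∑ j ∈ Finset.range (k+1), |R j| :=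
    Finset.sum_nonneg (fun _ _ => abs_nonneg _)
  unfold QQ; linarith

private lemma lt_QQ (R : ℕ → ℝ) {j k : ℕ} (h : j ≤ k) : R j < QQ R k := by
  have h1 : |R j| ≤ ∑ t ∈ Finset.range (k+1), |R t| :=
    Finset.single_le_sum (f := fun t => |R t|) (fun _ _ => abs_nonneg _)
      (Finset.mem_range.mpr (by omega))
  have h2 := le_abs_self (R j)
  unfold QQ; linarith

/-- If a countable group `G` with a proper left-invariant metric acts by
isometries on a space `X` with asymptotic property C and all `R`-stabilizers of
`x₀` have asymptotic dimension at most `n`, then `G` has asymptotic property C. -/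
theorem apc_of_group_action {G X : Type*} [Group G] [Countable G]
    [MetricSpace G] [MetricSpace X] [MulAction G X]
    (hinv : ∀ g h h' : G, dist (g * h) (g * h') = dist h h')
    (hproper : ∀ r : ℝ, {g : G | dist g (1 : G) ≤ r}.Finite)
    (hiso : ∀ g : G, Isometry (fun x : X => g • x))
    (hX : APCD (dist : X → X → ℝ))
    (x₀ : X) (n : ℕ)
    (hW : ∀ R : ℝ, 0 < R →
      AsdimLE (dist : G → G → ℝ) {g : G | dist (g • x₀) x₀ ≤ R} n) :
    APCD (dist : G → G → ℝ) := by
  classical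
  intro R
  -- distance facts
  have key1 : ∀ g h : G, dist ((h⁻¹ * g) • x₀) x₀ = dist (g • x₀) (h • x₀) := by
    intro g h
    have h2 : dist (h⁻¹ • (g • x₀)) (h⁻¹ • (h • x₀)) = dist (g • x₀) (h • x₀) :=
      (hiso h⁻¹).dist_eq _ _
    rw [← h2, mul_smul, inv_smul_smul]
  have key2 : ∀ g h : G, dist (h⁻¹ * g) 1 = dist g h := by
    intro g h
    simpa using hinv h⁻¹ g h
  -- M r : bound on displacement of x₀ by elements of the r-ball
  have hMex : ∀ r : ℝ, ∃ M : ℝ, ∀ g : G, dist g 1 ≤ r → dist (g • x₀) x₀ ≤ M := by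
    intro r
    have hfin : ((fun g : G => dist (g • x₀) x₀) '' {g : G | dist g 1 ≤ r}).Finite :=
      (hproper r).image _
    obtain ⟨M, hM⟩ := hfin.bddAbove
    exact ⟨M, fun g hg => hM ⟨g, hg, rfl⟩⟩
  choose M hM using hMex
  -- apply APC of X
  obtain ⟨m, 𝒱, hVcov, hVdisj, hVbdd⟩ := hX (fun i => M (QQ R ((i+1)*(n+1))))
  -- bounds for the X-families
  have hBex : ∀ i : ℕ, ∃ B : ℝ, 0 < B ∧
      (i < m → ∀ V ∈ 𝒱 i, ∀ x ∈ V, ∀ y ∈ V, dist x y ≤ B) := by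
    intro i
    by_cases hi : i < m
    · obtain ⟨B0, hB0⟩ := hVbdd i hi
      exact ⟨max B0 1, lt_of_lt_of_le one_pos (le_max_right _ _),
        fun _ V hV x hx y hy => le_trans (hB0 V hV x hx y hy) (le_max_left _ _)⟩
    · exact ⟨1, one_pos, fun h => absurd h hi⟩
  choose B hBpos hBbdd using hBex
  -- covers of the stabilizers
  have hWex : ∀ i : ℕ, ∃ D : ℝ, ∃ 𝒲 : Fin (n+1) → Set (Set G),
      (∀ x : G, dist (x • x₀) x₀ ≤ B i → ∃ j, ∃ S ∈ 𝒲 j, x ∈ S) ∧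
      (∀ j, RDisj dist (QQ R ((i+1)*(n+1))) (𝒲 j)) ∧
      (∀ j, BddFam dist (D) (𝒲 j)) := by
    intro i
    obtain ⟨D, 𝒲, _, hcov, hdisj, hbdd⟩ :=
      hW (B i) (hBpos i) (QQ R ((i+1)*(n+1))) (QQ_pos _ _)
    exact ⟨D, 𝒲, fun x hx => hcov x hx, hdisj, hbdd⟩
  choose D 𝒲 hWcov hWdisj hWbdd using hWex
  -- choice of basepoint in each preimage
  have hvex : ∀ V : Set X, ∃ h : G, (∃ g : G, g • x₀ ∈ V) → h • x₀ ∈ V := by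
    intro V
    by_cases hV : ∃ g : G, g • x₀ ∈ V
    · exact ⟨hV.choose, fun _ => hV.choose_spec⟩
    · exact ⟨1, fun h => absurd h hV⟩
  choose hv hhv using hvex
  refine ⟨m * (n+1), fun k =>
    {T | ∃ V ∈ 𝒱 (k / (n+1)),
      ∃ S ∈ 𝒲 (k / (n+1)) ⟨k % (n+1), Nat.mod_lt _ (Nat.succ_pos n)⟩,
      T = ((fun s => hv V * s) '' S) ∩ {g : G | g • x₀ ∈ V}}, ?_, ?_, ?_⟩
  · -- coverage
    intro g
    obtain ⟨i, him, V, hV, hgV⟩ := hVcov (g • x₀)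
    have hne : ∃ g' : G, g' • x₀ ∈ V := ⟨g, hgV⟩
    have hhvV : hv V • x₀ ∈ V := hhv V hne
    have hdw : dist (((hv V)⁻¹ * g) • x₀) x₀ ≤ B i := by
      rw [key1]
      exact hBbdd i him V hV _ hgV _ hhvV
    obtain ⟨j, S, hS, hmem⟩ := hWcov i _ hdw
    have hdiv : ((n+1) * i + j.val) / (n+1) = i := by
      rw [Nat.mul_add_div (Nat.succ_pos n), Nat.div_eq_of_lt j.isLt, Nat.add_zero]
    have hmod : ((n+1) * i + j.val) % (n+1) = j.val := by
      rw [Nat.mul_add_mod, Nat.mod_eq_of_lt j.isLt]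
    refine ⟨(n+1) * i + j.val, ?_,
      ((fun s => hv V * s) '' S) ∩ {g : G | g • x₀ ∈ V}, ?_, ?_⟩
    · calc (n+1) * i + j.val < (n+1) * i + (n+1) := Nat.add_lt_add_left j.isLt _
        _ = (n+1) * (i+1) := by ring
        _ ≤ (n+1) * m := Nat.mul_le_mul_left _ him
        _ = m * (n+1) := Nat.mul_comm _ _
    · simp only [Set.mem_setOf_eq, hdiv, hmod, Fin.eta]
      exact ⟨V, hV, S, hS, rfl⟩
    · exact ⟨⟨(hv V)⁻¹ * g, hmem, mul_inv_cancel_left _ _⟩, hgV⟩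
  · -- disjointness
    intro k hk A hA A' hA' hAB x hx y hy
    have him : k / (n+1) < m := (Nat.div_lt_iff_lt_mul (Nat.succ_pos n)).mpr hk
    set i := k / (n+1) with hi
    obtain ⟨V, hV, S, hS, rfl⟩ := hA
    obtain ⟨V', hV', S', hS', rfl⟩ := hA'
    have hk2 : k < (n+1) * (i+1) := by
      have h1 := (Nat.div_add_mod k (n+1)).symm
      have h2 := Nat.mod_lt k (Nat.succ_pos n)
      calc k = (n+1) * i + k % (n+1) := h1
        _ < (n+1) * i + (n+1) := Nat.add_lt_add_left h2 _
        _ = (n+1) * (i+1) := by ring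
    have hRk : R k < QQ R ((i+1)*(n+1)) := by
      refine lt_QQ R ?_
      rw [Nat.mul_comm]
      omega
    by_cases hVV : V = V'
    · subst hVV
      by_cases hSS : S = S'
      · exact absurd (by rw [hSS]) hAB
      · obtain ⟨⟨s, hs, rfl⟩, hxV⟩ := hx
        obtain ⟨⟨s', hs', rfl⟩, hyV⟩ := hy
        have hd : QQ R ((i+1)*(n+1)) < dist s s' :=
          hWdisj i _ S hS S' hS' hSS s hs s' hs'
        calc R k < QQ R ((i+1)*(n+1)) := hRk
          _ < dist s s' := hd
          _ = dist (hv V * s) (hv V * s') := (hinv _ _ _).symm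
    · have hxV : x • x₀ ∈ V := hx.2
      have hyV : y • x₀ ∈ V' := hy.2
      have hd : M (QQ R ((i+1)*(n+1))) < dist (x • x₀) (y • x₀) :=
        hVdisj i him V hV V' hV' hVV _ hxV _ hyV
      have hcontra : ¬ dist x y ≤ QQ R ((i+1)*(n+1)) := by
        intro hle
        have h1 : dist ((y⁻¹ * x) • x₀) x₀ ≤ M (QQ R ((i+1)*(n+1))) :=
          hM _ _ (by rw [key2]; exact hle)
        rw [key1] at h1
        linarith
      push_neg at hcontra
      linarith
  · -- boundedness
    intro k hk
    refine ⟨D (k / (n+1)), ?_⟩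
    rintro A ⟨V, hV, S, hS, rfl⟩ x hx y hy
    obtain ⟨⟨s, hs, rfl⟩, -⟩ := hx
    obtain ⟨⟨s', hs', rfl⟩, -⟩ := hy
    rw [hinv]
    exact hWbdd _ _ S hS s hs s' hs'
end

section
/- If f : G → H is a homomorphism of countable groups endowed with proper left-invariant metrics and ker f has finite asymptotic dimension, then the coarse fibers of f have uniform asymptotic property C. -/
/-- If the kernel of a homomorphism `f : G → H` of countable groups with proper
left-invariant metrics has finite asymptotic dimension, then the coarse fibers
of `f` have uniform asymptotic property C. -/
theorem coarse_fibers_of_hom {G H : Type*} [Group G] [Group H]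
    [Countable G] [Countable H] [MetricSpace G] [MetricSpace H]
    (hinvG : ∀ g h h' : G, dist (g * h) (g * h') = dist h h')
    (hproperG : ∀ r : ℝ, {g : G | dist g (1 : G) ≤ r}.Finite)
    (hinvH : ∀ g h h' : H, dist (g * h) (g * h') = dist h h')
    (hproperH : ∀ r : ℝ, {g : H | dist g (1 : H) ≤ r}.Finite)
    (f : G →* H)
    (hker : ∃ n : ℕ, AsdimLE (dist : G → G → ℝ) (f.ker : Set G) n) :
    CoarseFibersUAPC (dist : G → G → ℝ) (dist : H → H → ℝ) (f : G → H) := by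
  classical
  obtain ⟨n, hAsdim⟩ := hker
  intro R
  refine ⟨n + 1, fun M => ?_⟩
  -- a section of f on its range
  set sec : H → G := fun h => if hh : ∃ x : G, f x = h then hh.choose else 1 with hsec
  have hsec_spec : ∀ x : G, f (sec (f x)) = f x := by
    intro x
    have hh : ∃ y : G, f y = f x := ⟨x, rfl⟩
    simp only [hsec, dif_pos hh]
    exact hh.choose_spec
  -- bound on sections over the M-ball of H
  obtain ⟨C0, hC0⟩ : ∃ C0 : ℝ, ∀ h : H, dist h 1 ≤ M → dist (sec h) 1 ≤ C0 := by
    obtain ⟨C0, hC0⟩ := ((hproperH M).image (fun h => dist (sec h) 1)).bddAbove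
    exact ⟨C0, fun h hh => hC0 ⟨h, hh, rfl⟩⟩
  set C : ℝ := max C0 0 with hCdef
  have hCnn : (0 : ℝ) ≤ C := le_max_right _ _
  have hCb : ∀ h : H, dist h 1 ≤ M → dist (sec h) 1 ≤ C := fun h hh =>
    (hC0 h hh).trans (le_max_left _ _)
  -- a bound on the first n+1 values of R
  obtain ⟨Rm, hRmnn, hRm⟩ : ∃ Rm : ℝ, 0 ≤ Rm ∧ ∀ i, i < n + 1 → R i ≤ Rm := by
    obtain ⟨Rm, hRm⟩ := ((Set.finite_Iio (n+1)).image R).bddAbove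
    exact ⟨max Rm 0, le_max_right _ _, fun i hi =>
      le_trans (hRm ⟨i, hi, rfl⟩) (le_max_left _ _)⟩
  set R' : ℝ := Rm + 2 * C + 1 with hR'def
  have hR'pos : 0 < R' := by simp only [hR'def]; linarith
  obtain ⟨B0, 𝒱, h𝒱sub, h𝒱cov, h𝒱disj, h𝒱bdd⟩ := hAsdim R' hR'pos
  refine ⟨B0 + 2 * C, fun A hAM => ?_⟩
  rcases eq_or_ne A ∅ with hAe | hAe
  · refine ⟨fun _ => ∅, by simp, by simp [hAe], ?_, ?_⟩
    · intro i U hU; exact absurd hU (Set.notMem_empty U)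
    · intro i U hU; exact absurd hU (Set.notMem_empty U)
  obtain ⟨a, ha⟩ := Set.nonempty_iff_ne_empty.2 hAe
  set p : G → G := fun x => a⁻¹ * x * (sec (f (a⁻¹ * x)))⁻¹ with hp
  have hball : ∀ x ∈ A, dist (f (a⁻¹ * x)) 1 ≤ M := by
    intro x hx
    have h1 : f (a⁻¹ * x) = (f a)⁻¹ * f x := by simp [map_mul]
    have h2 : (1 : H) = (f a)⁻¹ * f a := by group
    rw [h1, h2, hinvH]
    exact le_of_lt (hAM x hx a ha)
  have hpker : ∀ x ∈ A, p x ∈ (f.ker : Set G) := by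
    intro x hx
    have h0 : f (p x) = f (a⁻¹ * x) * (f (sec (f (a⁻¹ * x))))⁻¹ := by
      simp [hp, map_mul]
    have : f (p x) = 1 := by rw [h0, hsec_spec]; group
    simpa [SetLike.mem_coe, MonoidHom.mem_ker] using this
  have hpdist : ∀ x ∈ A, dist (a⁻¹ * x) (p x) ≤ C := by
    intro x hx
    have h1 : a⁻¹ * x = p x * sec (f (a⁻¹ * x)) := by simp only [hp]; group
    have h2 : p x = p x * 1 := by group
    calc dist (a⁻¹ * x) (p x) = dist (p x * sec (f (a⁻¹ * x))) (p x * 1) := by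
          rw [← h1, ← h2]
      _ = dist (sec (f (a⁻¹ * x))) 1 := hinvG _ _ _
      _ ≤ C := hCb _ (hball x hx)
  have hdistshift : ∀ x y : G, dist x y = dist (a⁻¹ * x) (a⁻¹ * y) :=
    fun x y => (hinvG a⁻¹ x y).symm
  refine ⟨fun i => {U | ∃ S ∈ 𝒱 i, U = {x | x ∈ A ∧ p x ∈ S}}, ?_, ?_, ?_, ?_⟩
  · rintro i U ⟨S, _, rfl⟩ x hx
    exact hx.1
  · intro x hx
    obtain ⟨i, S, hS, hpxS⟩ := h𝒱cov (p x) (hpker x hx)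
    exact ⟨i, _, ⟨S, hS, rfl⟩, hx, hpxS⟩
  · rintro i U ⟨S, hS, rfl⟩ V ⟨T, hT, rfl⟩ hUV x hx y hy
    have hST : S ≠ T := by
      rintro rfl; exact hUV rfl
    have hd : R' < dist (p x) (p y) := h𝒱disj i S hS T hT hST _ hx.2 _ hy.2
    have htri : dist (p x) (p y) ≤
        dist (p x) (a⁻¹ * x) + dist (a⁻¹ * x) (a⁻¹ * y) + dist (a⁻¹ * y) (p y) :=
      dist_triangle4 _ _ _ _
    have h1 : dist (p x) (a⁻¹ * x) ≤ C := by
      rw [dist_comm]; exact hpdist x hx.1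
    have h2 : dist (a⁻¹ * y) (p y) ≤ C := hpdist y hy.1
    have hRi : R i.1 ≤ Rm := hRm i.1 i.2
    have := hdistshift x y
    simp only [hR'def] at hd
    linarith
  · rintro i U ⟨S, hS, rfl⟩ x hx y hy
    have hd : dist (p x) (p y) ≤ B0 := h𝒱bdd i S hS _ hx.2 _ hy.2
    have htri : dist (a⁻¹ * x) (a⁻¹ * y) ≤
        dist (a⁻¹ * x) (p x) + dist (p x) (p y) + dist (p y) (a⁻¹ * y) :=
      dist_triangle4 _ _ _ _
    have h1 : dist (a⁻¹ * x) (p x) ≤ C := hpdist x hx.1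
    have h2 : dist (p y) (a⁻¹ * y) ≤ C := by
      rw [dist_comm]; exact hpdist y hy.1
    have := hdistshift x y
    linarith
end

section
/- Let G and H be groups with proper left-invariant metrics, p : G × H → G the projection (with the ℓ² product metric on G × H). If H has asymptotic property C, then the coarse fibers of p have uniform asymptotic property C. -/
/-- If `H` has asymptotic property C, then the coarse fibers of the projection
`p : G × H → G` (ℓ² product metric) have uniform asymptotic property C, where
`G` and `H` carry proper left-invariant metrics. -/
theorem coarse_fibers_of_projection {G H : Type*} [Group G] [Group H]
    [MetricSpace G] [MetricSpace H]
    (hinvG : ∀ g h h' : G, dist (g * h) (g * h') = dist h h')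
    (hproperG : ∀ r : ℝ, {g : G | dist g (1 : G) ≤ r}.Finite)
    (hinvH : ∀ g h h' : H, dist (g * h) (g * h') = dist h h')
    (hproperH : ∀ r : ℝ, {g : H | dist g (1 : H) ≤ r}.Finite)
    (hH : APCD (dist : H → H → ℝ)) :
    CoarseFibersUAPC (prodDist : G × H → G × H → ℝ) (dist : G → G → ℝ)
      (Prod.fst : G × H → G) := by
  intro R
  obtain ⟨n, 𝒰, hcov, hdisj, hbdd⟩ := hH R
  refine ⟨n, fun M => ?_⟩
  choose Bf hBf using fun i : Fin n => hbdd i.1 i.2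
  obtain ⟨C, hC⟩ : ∃ C : ℝ, ∀ i : Fin n, Bf i ≤ C := by
    exact Finite.exists_le Bf
  refine ⟨Real.sqrt ((max M 0) ^ 2 + (max C 0) ^ 2), fun A hA => ?_⟩
  refine ⟨fun i => {V | ∃ S ∈ 𝒰 i.1, V = {x ∈ A | x.2 ∈ S}}, ?_, ?_, ?_, ?_⟩
  · rintro i V ⟨S, _, rfl⟩ x hx
    exact hx.1
  · intro x hx
    obtain ⟨i, hi, S, hS, hxS⟩ := hcov x.2
    exact ⟨⟨i, hi⟩, _, ⟨S, hS, rfl⟩, hx, hxS⟩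
  · rintro i V₁ ⟨S₁, hS₁, rfl⟩ V₂ ⟨S₂, hS₂, rfl⟩ hne x hx y hy
    have hSne : S₁ ≠ S₂ := by rintro rfl; exact hne rfl
    have h1 : R i.1 < dist x.2 y.2 := hdisj i.1 i.2 S₁ hS₁ S₂ hS₂ hSne x.2 hx.2 y.2 hy.2
    have h2 : dist x.2 y.2 ≤ prodDist x y := by
      rw [prodDist, Real.le_sqrt dist_nonneg]
      · nlinarith [sq_nonneg (dist x.1 y.1)]
      · positivity
    linarith
  · rintro i V ⟨S, hS, rfl⟩ x hx y hy
    have h1 : dist x.1 y.1 < M := hA x hx.1 y hy.1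
    have h2 : dist x.2 y.2 ≤ Bf i := hBf i S hS x.2 hx.2 y.2 hy.2
    rw [prodDist]
    apply Real.sqrt_le_sqrt
    have := dist_nonneg (x := x.1) (y := y.1)
    have := dist_nonneg (x := x.2) (y := y.2)
    have hM : dist x.1 y.1 ≤ max M 0 := le_max_of_le_left h1.le
    have hB : dist x.2 y.2 ≤ max C 0 := le_max_of_le_left (h2.trans (hC i))
    nlinarith
end

section
/- Let φ : G → H be a surjective homomorphism of finitely generated groups (with word metrics). If H has asymptotic property C and ker φ has finite asymptotic dimension, then G has asymptotic property C. -/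
/-- The word length of `g` with respect to the generating set `S`. -/
noncomputable def wordLen {G : Type*} [Group G] (S : Set G) (g : G) : ℕ :=
  sInf {n : ℕ | ∃ l : List G, l.length = n ∧ (∀ x ∈ l, x ∈ S) ∧ l.prod = g}

section WL
variable {G : Type*} [Group G] {S : Set G}

lemma wordSet_nonempty (hsym : ∀ s ∈ S, s⁻¹ ∈ S) (hgen : Subgroup.closure S = ⊤) (g : G) :
    {n : ℕ | ∃ l : List G, l.length = n ∧ (∀ x ∈ l, x ∈ S) ∧ l.prod = g}.Nonempty := by
  have hg : g ∈ Submonoid.closure (S ∪ S⁻¹) := by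
    have : g ∈ (Subgroup.closure S).toSubmonoid := by rw [hgen]; trivial
    rwa [Subgroup.closure_toSubmonoid] at this
  obtain ⟨l, hl, hprod⟩ := Submonoid.exists_list_of_mem_closure hg
  refine ⟨l.length, l, rfl, fun x hx => ?_, hprod⟩
  rcases hl x hx with h | h
  · exact h
  · simpa using hsym _ h

lemma wordLen_le {g : G} {l : List G} (hl : ∀ x ∈ l, x ∈ S) (hp : l.prod = g) :
    wordLen S g ≤ l.length := Nat.sInf_le ⟨l, rfl, hl, hp⟩

lemma wordLen_spec (hsym : ∀ s ∈ S, s⁻¹ ∈ S) (hgen : Subgroup.closure S = ⊤) (g : G) :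
    ∃ l : List G, l.length = wordLen S g ∧ (∀ x ∈ l, x ∈ S) ∧ l.prod = g :=
  Nat.sInf_mem (wordSet_nonempty hsym hgen g)

lemma wordLen_one : wordLen S (1 : G) = 0 :=
  Nat.le_zero.mp (wordLen_le (l := []) (by simp) (by simp))

lemma wordLen_mul_le (hsym : ∀ s ∈ S, s⁻¹ ∈ S) (hgen : Subgroup.closure S = ⊤) (g h : G) :
    wordLen S (g * h) ≤ wordLen S g + wordLen S h := by
  obtain ⟨l1, h1, hm1, hp1⟩ := wordLen_spec hsym hgen g
  obtain ⟨l2, h2, hm2, hp2⟩ := wordLen_spec hsym hgen h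
  have := wordLen_le (S := S) (g := g * h) (l := l1 ++ l2)
    (by intro x hx; rcases List.mem_append.mp hx with h | h; exacts [hm1 x h, hm2 x h])
    (by rw [List.prod_append, hp1, hp2])
  simpa [h1, h2] using this

end WL

section Map
variable {G H : Type*} [Group G] [Group H] {S : Set G} {T : Set H}

lemma wordLen_map_le (hTsym : ∀ t ∈ T, t⁻¹ ∈ T) (hTgen : Subgroup.closure T = ⊤)
    (φ : G →* H) (hSsym : ∀ s ∈ S, s⁻¹ ∈ S) (hSgen : Subgroup.closure S = ⊤)
    (C : ℕ) (hC : ∀ s ∈ S, wordLen T (φ s) ≤ C) (g : G) :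
    wordLen T (φ g) ≤ C * wordLen S g := by
  obtain ⟨l, hlen, hmem, hprod⟩ := wordLen_spec hSsym hSgen g
  rw [← hlen, ← hprod]
  clear hlen hprod
  induction l with
  | nil => simp [wordLen_one]
  | cons a l ih =>
    have ha := hmem a (by simp)
    have hl : ∀ x ∈ l, x ∈ S := fun x hx => hmem x (List.mem_cons_of_mem _ hx)
    calc wordLen T (φ (a * l.prod)) ≤ wordLen T (φ a) + wordLen T (φ l.prod) := by
          rw [map_mul]; exact wordLen_mul_le hTsym hTgen _ _
      _ ≤ C + C * l.length := Nat.add_le_add (hC a ha) (ih hl)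
      _ = C * (a :: l).length := by simp [Nat.mul_add, Nat.mul_succ]; ring

lemma lift_exists (hTsym : ∀ t ∈ T, t⁻¹ ∈ T) (hTgen : Subgroup.closure T = ⊤)
    (hSsym : ∀ s ∈ S, s⁻¹ ∈ S) (hSgen : Subgroup.closure S = ⊤)
    (φ : G →* H) (σ : H → G) (hσ : ∀ h, φ (σ h) = h)
    (C : ℕ) (hC : ∀ t ∈ T, wordLen S (σ t) ≤ C) (h : H) :
    ∃ g : G, φ g = h ∧ wordLen S g ≤ C * wordLen T h := by
  obtain ⟨l, hlen, hmem, hprod⟩ := wordLen_spec hTsym hTgen h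
  rw [← hlen, ← hprod]
  clear hlen hprod
  induction l with
  | nil => exact ⟨1, by simp, by simp [wordLen_one]⟩
  | cons a l ih =>
    obtain ⟨g, hg, hglen⟩ := ih (fun x hx => hmem x (List.mem_cons_of_mem _ hx))
    refine ⟨σ a * g, by simp [hg, hσ], ?_⟩
    calc wordLen S (σ a * g) ≤ wordLen S (σ a) + wordLen S g :=
          wordLen_mul_le hSsym hSgen _ _
      _ ≤ C + C * l.length := Nat.add_le_add (hC a (hmem a (by simp))) hglen
      _ = C * (a :: l).length := by simp [Nat.mul_succ]; ring
end Map

open Classical in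
noncomputable def pickPt {H : Type*} [One H] (V : Set H) : H :=
  if h : V.Nonempty then h.choose else 1

open Classical in
lemma pickPt_mem {H : Type*} [One H] {V : Set H} (h : V.Nonempty) : pickPt V ∈ V := by
  rw [pickPt, dif_pos h]; exact h.choose_spec

open Classical in
noncomputable def pickK {G : Type*} [One G] [MetricSpace G] (K : Set G) (τ : ℝ) (z : G) : G :=
  if h : ∃ k, k ∈ K ∧ dist z k ≤ τ then h.choose else 1

open Classical in
lemma pickK_spec {G : Type*} [One G] [MetricSpace G] {K : Set G} {τ : ℝ} {z : G}
    (h : ∃ k, k ∈ K ∧ dist z k ≤ τ) : pickK K τ z ∈ K ∧ dist z (pickK K τ z) ≤ τ := by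
  rw [pickK, dif_pos h]; exact h.choose_spec

def finmk (n p : ℕ) : Fin (n + 1) := ⟨p % (n + 1), Nat.mod_lt p (Nat.succ_pos n)⟩

/-- If `φ : G → H` is a surjective homomorphism of finitely generated groups with
word metrics, `H` has asymptotic property C, and `ker φ` has finite asymptotic
dimension, then `G` has asymptotic property C. -/
theorem apc_of_surjection {G H : Type*} [Group G] [Group H]
    [MetricSpace G] [MetricSpace H]
    (S : Finset G) (T : Finset H)
    (hSsym : ∀ s ∈ S, s⁻¹ ∈ S) (hSgen : Subgroup.closure (S : Set G) = ⊤)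
    (hTsym : ∀ t ∈ T, t⁻¹ ∈ T) (hTgen : Subgroup.closure (T : Set H) = ⊤)
    (hdG : ∀ g h : G, dist g h = (wordLen (S : Set G) (g⁻¹ * h) : ℝ))
    (hdH : ∀ g h : H, dist g h = (wordLen (T : Set H) (g⁻¹ * h) : ℝ))
    (φ : G →* H) (hφ : Function.Surjective φ)
    (hker : ∃ n : ℕ, AsdimLE (dist : G → G → ℝ) (φ.ker : Set G) n)
    (hH : APCD (dist : H → H → ℝ)) :
    APCD (dist : G → G → ℝ) := by
  intro R
  obtain ⟨n, hker⟩ := hker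
  have hSsym' : ∀ s ∈ (S : Set G), s⁻¹ ∈ (S : Set G) := fun s hs => by
    simpa using hSsym s (by simpa using hs)
  have hTsym' : ∀ t ∈ (T : Set H), t⁻¹ ∈ (T : Set H) := fun t ht => by
    simpa using hTsym t (by simpa using ht)
  -- left invariance of the metric
  have hinv : ∀ g x y : G, dist (g * x) (g * y) = dist x y := by
    intro g x y
    have e : (g * x)⁻¹ * (g * y) = x⁻¹ * y := by group
    rw [hdG, hdG, e]
  -- Lipschitz constant
  set C0 : ℕ := S.sup (fun s => wordLen (T : Set H) (φ s)) with hC0def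
  have hC0 : ∀ s ∈ (S : Set G), wordLen (T : Set H) (φ s) ≤ C0 :=
    fun s hs => Finset.le_sup (f := fun s => wordLen (T : Set H) (φ s)) (by simpa using hs)
  have hLip : ∀ x y : G, dist (φ x) (φ y) ≤ (C0 : ℝ) * dist x y := by
    intro x y
    rw [hdH, hdG, ← map_inv, ← map_mul]
    exact_mod_cast wordLen_map_le hTsym' hTgen φ hSsym' hSgen C0 hC0 (x⁻¹ * y)
  -- lifting constant
  let σ : H → G := Function.surjInv hφ
  have hσ : ∀ h, φ (σ h) = h := fun h => Function.surjInv_eq hφ h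
  set C1 : ℕ := T.sup (fun t => wordLen (S : Set G) (σ t)) with hC1def
  have hC1 : ∀ t ∈ (T : Set H), wordLen (S : Set G) (σ t) ≤ C1 :=
    fun t ht => Finset.le_sup (f := fun t => wordLen (S : Set G) (σ t)) (by simpa using ht)
  -- key approximation by the kernel
  have hK : ∀ x y : G, ∃ k, k ∈ (φ.ker : Set G) ∧
      dist (x⁻¹ * y) k ≤ (C1 : ℝ) * dist (φ x) (φ y) := by
    intro x y
    obtain ⟨g, hg, hglen⟩ := lift_exists hTsym' hTgen hSsym' hSgen φ σ hσ C1 hC1 (φ (x⁻¹ * y))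
    refine ⟨x⁻¹ * y * g⁻¹, ?_, ?_⟩
    · show x⁻¹ * y * g⁻¹ ∈ φ.ker
      rw [MonoidHom.mem_ker, map_mul, map_inv, hg, map_mul, map_inv, mul_inv_cancel]
    · have e1 : dist (x⁻¹ * y) (x⁻¹ * y * g⁻¹) = (wordLen (S : Set G) g : ℝ) := by
        rw [dist_comm, hdG]
        congr 2
        group
      have e2 : dist (φ x) (φ y) = (wordLen (T : Set H) (φ (x⁻¹ * y)) : ℝ) := by
        rw [hdH, ← map_inv, ← map_mul]
      rw [e1, e2]
      exact_mod_cast hglen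
  -- the sequence of separation constants
  let r : ℕ → ℝ := fun j => 1 + ∑ k ∈ Finset.range ((j + 1) * (n + 1)), max (R k) 0
  have hr_pos : ∀ j, 0 < r j := by
    intro j
    have : 0 ≤ ∑ k ∈ Finset.range ((j + 1) * (n + 1)), max (R k) 0 :=
      Finset.sum_nonneg fun k _ => le_max_right _ _
    show 0 < 1 + ∑ k ∈ Finset.range ((j + 1) * (n + 1)), max (R k) 0
    linarith
  have hr_ge : ∀ j k, k < (j + 1) * (n + 1) → R k < r j := by
    intro j k hk
    have h1 : max (R k) 0 ≤ ∑ k' ∈ Finset.range ((j + 1) * (n + 1)), max (R k') 0 :=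
      Finset.single_le_sum (fun k' _ => le_max_right (R k') 0) (Finset.mem_range.mpr hk)
    have h2 : R k ≤ max (R k) 0 := le_max_left _ _
    show R k < 1 + ∑ k' ∈ Finset.range ((j + 1) * (n + 1)), max (R k') 0
    linarith
  -- apply property C of H
  obtain ⟨m, 𝒱, hVcov, hVdisj, hVbdd⟩ := hH (fun j => ((C0 : ℝ) + 1) * r j)
  choose! D hD using hVbdd
  let τ : ℕ → ℝ := fun j => (C1 : ℝ) * max (D j) 0
  have hτ : ∀ j, 0 ≤ τ j := fun j =>
    mul_nonneg (Nat.cast_nonneg _) (le_max_right _ _)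
  have hρ : ∀ j, 0 < r j + 2 * τ j := fun j => by
    have := hr_pos j; have := hτ j; linarith
  choose BK 𝒲 hWsub hWcov hWdisj hWbdd using fun j => hker (r j + 2 * τ j) (hρ j)
  -- the key pick lemma
  have hκ : ∀ j, j < m → ∀ V, V ∈ 𝒱 j → ∀ y : G, φ y ∈ V →
      pickK (φ.ker : Set G) (τ j) ((σ (pickPt V))⁻¹ * y) ∈ (φ.ker : Set G) ∧
      dist ((σ (pickPt V))⁻¹ * y)
        (pickK (φ.ker : Set G) (τ j) ((σ (pickPt V))⁻¹ * y)) ≤ τ j := by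
    intro j hj V hV y hy
    have hne : V.Nonempty := ⟨_, hy⟩
    have hmem := pickPt_mem hne
    have h1 : dist (φ (σ (pickPt V))) (φ y) ≤ max (D j) 0 := by
      rw [hσ]
      exact le_trans (hD j hj V hV _ hmem _ hy) (le_max_left _ _)
    obtain ⟨k, hk, hkd⟩ := hK (σ (pickPt V)) y
    refine pickK_spec ⟨k, hk, le_trans hkd ?_⟩
    exact mul_le_mul_of_nonneg_left h1 (Nat.cast_nonneg _)
  refine ⟨m * (n + 1), fun p =>
    { W | ∃ V ∈ 𝒱 (p / (n + 1)), ∃ Sw ∈ 𝒲 (p / (n + 1)) (finmk n p),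
        W = { y | φ y ∈ V ∧
          pickK (φ.ker : Set G) (τ (p / (n + 1))) ((σ (pickPt V))⁻¹ * y) ∈ Sw } }, ?_, ?_, ?_⟩
  · -- cover
    intro x
    obtain ⟨j, hj, V, hV, hxV⟩ := hVcov (φ x)
    have hkx := hκ j hj V hV x hxV
    obtain ⟨i, Sw, hSw, hkS⟩ := hWcov j _ hkx.1
    have hdiv : ((n + 1) * j + i.val) / (n + 1) = j := by
      rw [Nat.mul_add_div (Nat.succ_pos n), Nat.div_eq_of_lt i.isLt, Nat.add_zero]
    have hfin : finmk n ((n + 1) * j + i.val) = i := by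
      apply Fin.ext
      show ((n + 1) * j + i.val) % (n + 1) = i.val
      rw [Nat.mul_add_mod, Nat.mod_eq_of_lt i.isLt]
    refine ⟨(n + 1) * j + i.val, ?_,
      { y | φ y ∈ V ∧ pickK (φ.ker : Set G) (τ (((n + 1) * j + i.val) / (n + 1)))
          ((σ (pickPt V))⁻¹ * y) ∈ Sw }, ?_, ?_⟩
    · calc (n + 1) * j + i.val < (n + 1) * j + (n + 1) := Nat.add_lt_add_left i.isLt _
        _ = (n + 1) * (j + 1) := by ring
        _ ≤ (n + 1) * m := Nat.mul_le_mul_left _ hj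
        _ = m * (n + 1) := Nat.mul_comm _ _
    · exact ⟨V, by rw [hdiv]; exact hV, Sw, by rw [hdiv, hfin]; exact hSw, rfl⟩
    · exact ⟨hxV, by rw [hdiv]; exact hkS⟩
  · -- disjointness
    intro p hp
    have hj : p / (n + 1) < m := (Nat.div_lt_iff_lt_mul (Nat.succ_pos n)).mpr hp
    have hpbound : p < (p / (n + 1) + 1) * (n + 1) := by
      have h1 := Nat.div_add_mod p (n + 1)
      have h2 : p % (n + 1) < n + 1 := Nat.mod_lt p (Nat.succ_pos n)
      calc p = (n + 1) * (p / (n + 1)) + p % (n + 1) := h1.symm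
        _ < (n + 1) * (p / (n + 1)) + (n + 1) := Nat.add_lt_add_left h2 _
        _ = (p / (n + 1) + 1) * (n + 1) := by ring
    intro A hA B hB hAB x hx y hy
    obtain ⟨V, hV, Sa, hSa, rfl⟩ := hA
    obtain ⟨V', hV', Sb, hSb, rfl⟩ := hB
    obtain ⟨hxV, hxS⟩ := hx
    obtain ⟨hyV, hyS⟩ := hy
    have hRr : R p < r (p / (n + 1)) := hr_ge _ _ hpbound
    by_cases hVV : V = V'
    · subst hVV
      have hSne : Sa ≠ Sb := by rintro rfl; exact hAB rfl
      have hkx := hκ _ hj V hV x hxV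
      have hky := hκ _ hj V hV y hyV
      have hd := hWdisj (p / (n + 1)) (finmk n p) Sa hSa Sb hSb hSne _ hxS _ hyS
      have tri : dist (pickK (φ.ker : Set G) (τ (p / (n + 1))) ((σ (pickPt V))⁻¹ * x))
          (pickK (φ.ker : Set G) (τ (p / (n + 1))) ((σ (pickPt V))⁻¹ * y))
          ≤ τ (p / (n + 1)) + dist x y + τ (p / (n + 1)) := by
        have t4 := dist_triangle4
          (pickK (φ.ker : Set G) (τ (p / (n + 1))) ((σ (pickPt V))⁻¹ * x))
          ((σ (pickPt V))⁻¹ * x) ((σ (pickPt V))⁻¹ * y)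
          (pickK (φ.ker : Set G) (τ (p / (n + 1))) ((σ (pickPt V))⁻¹ * y))
        rw [hinv] at t4
        have e1 := hkx.2
        rw [dist_comm] at e1
        have e2 := hky.2
        linarith
      calc R p < r (p / (n + 1)) := hRr
        _ ≤ dist x y := by linarith
    · have hd := hVdisj _ hj V hV V' hV' hVV (φ x) hxV (φ y) hyV
      have hl := hLip x y
      have hd0 : (0 : ℝ) ≤ dist x y := dist_nonneg
      have hgt : ((C0 : ℝ) + 1) * r (p / (n + 1)) < ((C0 : ℝ) + 1) * dist x y := by
        calc ((C0 : ℝ) + 1) * r (p / (n + 1)) < dist (φ x) (φ y) := hd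
          _ ≤ (C0 : ℝ) * dist x y := hl
          _ ≤ ((C0 : ℝ) + 1) * dist x y := by linarith
      have hpos : (0 : ℝ) < (C0 : ℝ) + 1 := by positivity
      have := (mul_lt_mul_iff_right₀ hpos).mp hgt
      linarith
  · -- uniform boundedness
    intro p hp
    have hj : p / (n + 1) < m := (Nat.div_lt_iff_lt_mul (Nat.succ_pos n)).mpr hp
    refine ⟨τ (p / (n + 1)) + BK (p / (n + 1)) + τ (p / (n + 1)), ?_⟩
    intro A hA x hx y hy
    obtain ⟨V, hV, Sa, hSa, rfl⟩ := hA
    obtain ⟨hxV, hxS⟩ := hx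
    obtain ⟨hyV, hyS⟩ := hy
    have hkx := hκ _ hj V hV x hxV
    have hky := hκ _ hj V hV y hyV
    have hb := hWbdd (p / (n + 1)) (finmk n p) Sa hSa _ hxS _ hyS
    have t4 := dist_triangle4 ((σ (pickPt V))⁻¹ * x)
      (pickK (φ.ker : Set G) (τ (p / (n + 1))) ((σ (pickPt V))⁻¹ * x))
      (pickK (φ.ker : Set G) (τ (p / (n + 1))) ((σ (pickPt V))⁻¹ * y))
      ((σ (pickPt V))⁻¹ * y)
    rw [hinv] at t4
    have e2 := hky.2
    rw [dist_comm] at e2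
    have e1 := hkx.2
    linarith
end

section
/- Let X be a discrete pointed metric space and the free product *X. If X has asymptotic property C, then *X has asymptotic property C. Consequently, if X and Y are discrete metric spaces with asymptotic property C, then the free product X * Y has asymptotic property C. -/
/-- Norm of a word: the sum of the distances of its letters to the base point. -/
noncomputable def wnorm {α : Type*} (d : α → α → ℝ) (p : α) (l : List α) : ℝ :=
  (l.map (d p)).sum

/-- Distance in the free product `*X`: eliminate the common prefix; if the words
diverge at letters `a ≠ b`, the distance is `d a b` plus the norms of the
remaining suffixes; if one word is a prefix of the other, it is the norm of the
remaining suffix. -/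
noncomputable def fpdist {α : Type*} (d : α → α → ℝ) (p : α) : List α → List α → ℝ
  | a :: u, b :: v =>
      haveI : Decidable (a = b) := Classical.dec _
      if a = b then fpdist d p u v else d a b + wnorm d p u + wnorm d p v
  | [], v => wnorm d p v
  | u, [] => wnorm d p u

/-- A subset of the free product is flat if it is contained in `x · (X \ {p})`
for some word `x`. -/
def Flat {α : Type*} (p : α) (A : Set (List α)) : Prop :=
  ∃ x : List α, ∀ w ∈ A, ∃ a : α, a ≠ p ∧ w = x ++ [a]

/-- The (pseudo)distance on the wedge `X ∨ Y`, realized on `X ⊕ Y` with the two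
base points `x₀, y₀` identified (at distance `0`). -/
noncomputable def wedgeDist {X Y : Type*} [MetricSpace X] [MetricSpace Y]
    (x₀ : X) (y₀ : Y) : X ⊕ Y → X ⊕ Y → ℝ
  | .inl a, .inl b => dist a b
  | .inl a, .inr b => dist a x₀ + dist y₀ b
  | .inr a, .inl b => dist a y₀ + dist x₀ b
  | .inr a, .inr b => dist a b

/-- Letters from the two factors are on different sides. -/
def DiffSide {X Y : Type*} : X ⊕ Y → X ⊕ Y → Prop
  | .inl _, .inl _ => False
  | .inr _, .inr _ => False
  | _, _ => True



section Aux
variable {α : Type*} (d : α → α → ℝ) (p : α)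

theorem wnorm_nil : wnorm d p [] = 0 := by simp [wnorm]
theorem wnorm_cons (a : α) (l : List α) : wnorm d p (a :: l) = d p a + wnorm d p l := by
  simp [wnorm]
theorem wnorm_append (l l' : List α) : wnorm d p (l ++ l') = wnorm d p l + wnorm d p l' := by
  simp [wnorm]
theorem fpdist_nil_left (v : List α) : fpdist d p [] v = wnorm d p v := by
  cases v <;> simp [fpdist, wnorm]
theorem fpdist_nil_right (u : List α) : fpdist d p u [] = wnorm d p u := by
  cases u <;> simp [fpdist, wnorm]
theorem fpdist_cons_eq (a : α) (u v : List α) :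
    fpdist d p (a :: u) (a :: v) = fpdist d p u v := by
  simp [fpdist]
theorem fpdist_cons_ne {a b : α} (h : a ≠ b) (u v : List α) :
    fpdist d p (a :: u) (b :: v) = d a b + wnorm d p u + wnorm d p v := by
  simp [fpdist, h]

variable (hnn : ∀ a b, 0 ≤ d a b)
include hnn

theorem wnorm_nonneg (l : List α) : 0 ≤ wnorm d p l := by
  induction l with
  | nil => simp [wnorm_nil]
  | cons a l ih => rw [wnorm_cons]; have := hnn p a; linarith

theorem fpdist_nonneg (u v : List α) : 0 ≤ fpdist d p u v := by
  induction u generalizing v with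
  | nil => rw [fpdist_nil_left]; exact wnorm_nonneg d p hnn v
  | cons a u ih =>
    cases v with
    | nil => rw [fpdist_nil_right]; exact wnorm_nonneg d p hnn _
    | cons b v =>
      by_cases hab : a = b
      · subst hab; rw [fpdist_cons_eq]; exact ih v
      · rw [fpdist_cons_ne d p hab]
        have := hnn a b
        have := wnorm_nonneg d p hnn u
        have := wnorm_nonneg d p hnn v
        linarith

omit hnn in
theorem fpdist_comm (hs : ∀ a b, d a b = d b a) (u v : List α) :
    fpdist d p u v = fpdist d p v u := by
  induction u generalizing v with
  | nil => rw [fpdist_nil_left, fpdist_nil_right]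
  | cons a u ih =>
    cases v with
    | nil => rw [fpdist_nil_left, fpdist_nil_right]
    | cons b v =>
      by_cases hab : a = b
      · subst hab; rw [fpdist_cons_eq, fpdist_cons_eq]; exact ih v
      · rw [fpdist_cons_ne d p hab, fpdist_cons_ne d p (Ne.symm hab), hs a b]; ring

omit hnn in
theorem fpdist_append (c u v : List α) :
    fpdist d p (c ++ u) (c ++ v) = fpdist d p u v := by
  induction c with
  | nil => rfl
  | cons a c ih => simpa [fpdist_cons_eq] using ih

theorem fpdist_le (htri : ∀ a b, d a b ≤ d p a + d p b) (u v : List α) :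
    fpdist d p u v ≤ wnorm d p u + wnorm d p v := by
  induction u generalizing v with
  | nil =>
    rw [fpdist_nil_left, wnorm_nil]
    have := wnorm_nonneg d p hnn v; linarith
  | cons a u ih =>
    cases v with
    | nil =>
      rw [fpdist_nil_right, wnorm_nil]
      have := wnorm_nonneg d p hnn (a :: u); linarith
    | cons b v =>
      by_cases hab : a = b
      · subst hab; rw [fpdist_cons_eq, wnorm_cons, wnorm_cons]
        have := ih v; have := hnn p a; linarith
      · rw [fpdist_cons_ne d p hab, wnorm_cons, wnorm_cons]
        have := htri a b; linarith

theorem wnorm_le (htri2 : ∀ a b, d p a ≤ d p b + d a b) (u v : List α) :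
    wnorm d p u ≤ wnorm d p v + fpdist d p u v := by
  induction u generalizing v with
  | nil =>
    rw [wnorm_nil]
    have := wnorm_nonneg d p hnn v
    have := fpdist_nonneg d p hnn ([] : List α) v
    linarith
  | cons a u ih =>
    cases v with
    | nil =>
      rw [fpdist_nil_right, wnorm_nil]
      linarith [wnorm_nonneg d p hnn (a :: u)]
    | cons b v =>
      by_cases hab : a = b
      · subst hab; rw [fpdist_cons_eq, wnorm_cons, wnorm_cons]
        have := ih v; linarith
      · rw [fpdist_cons_ne d p hab, wnorm_cons, wnorm_cons]
        have := htri2 a b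
        have := wnorm_nonneg d p hnn v
        have := wnorm_nonneg d p hnn u
        linarith

omit hnn in
theorem exists_split (w : List α) (s : ℝ) (hs : 0 ≤ s) (hsw : s < wnorm d p w) :
    ∃ e x u, w = e ++ x :: u ∧ wnorm d p e ≤ s ∧ s < wnorm d p e + d p x := by
  induction w generalizing s with
  | nil => rw [wnorm_nil] at hsw; linarith
  | cons a w ih =>
    by_cases h : s < d p a
    · exact ⟨[], a, w, rfl, by rw [wnorm_nil]; exact hs, by rw [wnorm_nil]; linarith⟩
    · push_neg at h
      rw [wnorm_cons] at hsw
      obtain ⟨e, x, u, he, h1, h2⟩ := ih (s - d p a) (by linarith) (by linarith)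
      exact ⟨a :: e, x, u, by rw [he]; rfl, by rw [wnorm_cons]; linarith,
        by rw [wnorm_cons]; linarith⟩

theorem split_uniq_aux {w e e' : List α} {x x' : α} {u u' : List α} {s : ℝ}
    (hw : w = e ++ x :: u) (hw' : w = e' ++ x' :: u')
    (h2 : s < wnorm d p e + d p x) (h1' : wnorm d p e' ≤ s)
    (hlen : e.length < e'.length) : False := by
  have hpre : e <+: e' := by
    have p1 : e <+: w := hw ▸ ⟨x :: u, rfl⟩
    have p2 : e' <+: w := hw' ▸ ⟨x' :: u', rfl⟩
    exact List.prefix_of_prefix_length_le p1 p2 (le_of_lt hlen)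
  obtain ⟨t, ht⟩ := hpre
  cases t with
  | nil => rw [List.append_nil] at ht; subst ht; omega
  | cons y t' =>
    have hxy : x = y := by
      have : e ++ x :: u = e ++ (y :: (t' ++ x' :: u')) := by
        rw [← ht] at hw'; rw [hw] at hw'; simpa using hw'
      have := List.append_cancel_left this
      exact (List.cons_eq_cons.mp this).1
    subst hxy
    rw [← ht, wnorm_append, wnorm_cons] at h1'
    have := wnorm_nonneg d p hnn t'
    linarith

theorem split_uniq {w e e' : List α} {x x' : α} {u u' : List α} {s : ℝ}
    (hw : w = e ++ x :: u) (hw' : w = e' ++ x' :: u')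
    (h1 : wnorm d p e ≤ s) (h2 : s < wnorm d p e + d p x)
    (h1' : wnorm d p e' ≤ s) (h2' : s < wnorm d p e' + d p x') :
    e = e' ∧ x = x' ∧ u = u' := by
  rcases lt_trichotomy e.length e'.length with h | h | h
  · exact absurd (split_uniq_aux d p hnn hw hw' h2 h1' h) (fun f => f)
  · have := hw ▸ hw'
    obtain ⟨he, htail⟩ := List.append_inj this h
    exact ⟨he, (List.cons_eq_cons.mp htail).1, (List.cons_eq_cons.mp htail).2⟩
  · exact absurd (split_uniq_aux d p hnn hw' hw h2' h1 h) (fun f => f)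

omit hnn in
theorem fpdist_cases (u v : List α) :
    (∃ z, v = u ++ z ∧ fpdist d p u v = wnorm d p z) ∨
    (∃ z, u = v ++ z ∧ fpdist d p u v = wnorm d p z) ∨
    (∃ c a b y z, u = c ++ a :: y ∧ v = c ++ b :: z ∧ a ≠ b ∧
      fpdist d p u v = d a b + wnorm d p y + wnorm d p z) := by
  induction u generalizing v with
  | nil => exact Or.inl ⟨v, by simp, fpdist_nil_left d p v⟩
  | cons a u ih =>
    cases v with
    | nil => exact Or.inr (Or.inl ⟨a :: u, by simp, fpdist_nil_right d p _⟩)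
    | cons b v =>
      by_cases hab : a = b
      · subst hab
        rcases ih v with ⟨z, hz, he⟩ | ⟨z, hz, he⟩ | ⟨c, a', b', y, z, h1, h2, h3, h4⟩
        · exact Or.inl ⟨z, by rw [hz]; rfl, by rw [fpdist_cons_eq]; exact he⟩
        · exact Or.inr (Or.inl ⟨z, by rw [hz]; rfl, by rw [fpdist_cons_eq]; exact he⟩)
        · exact Or.inr (Or.inr ⟨a :: c, a', b', y, z, by rw [h1]; rfl, by rw [h2]; rfl, h3,
            by rw [fpdist_cons_eq]; exact h4⟩)
      · exact Or.inr (Or.inr ⟨[], a, b, u, v, rfl, rfl, hab, fpdist_cons_ne d p hab u v⟩)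


/-- Key lemma: two words of norm `> s + ra` at `fpdist ≤ ra` have the same split at level `s`,
up to the straddling letter, whose distance is bounded by the `fpdist`. -/
theorem key_split (w w' e e' : List α) (x x' : α) (u u' : List α) (s ra : ℝ)
    (hs : 0 ≤ s) (hra : 0 ≤ ra)
    (hw : w = e ++ x :: u) (hw' : w' = e' ++ x' :: u')
    (h1 : wnorm d p e ≤ s) (h2 : s < wnorm d p e + d p x)
    (h1' : wnorm d p e' ≤ s) (h2' : s < wnorm d p e' + d p x')
    (hnw : s + ra < wnorm d p w) (hnw' : s + ra < wnorm d p w')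
    (hρ : fpdist d p w w' ≤ ra) :
    e = e' ∧ (x = x' ∨ d x x' ≤ fpdist d p w w') := by
  rcases fpdist_cases d p w w' with ⟨z, hz, _⟩ | ⟨z, hz, _⟩ | ⟨c, a, b, y, z, hu, hv, hab, he⟩
  · -- w' = w ++ z
    have hw2 : w' = e ++ x :: (u ++ z) := by rw [hz, hw]; simp
    obtain ⟨he, hx, -⟩ := split_uniq d p hnn hw2 hw' h1 h2 h1' h2'
    exact ⟨he, Or.inl hx⟩
  · have hw2 : w = e' ++ x' :: (u' ++ z) := by rw [hz, hw']; simp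
    obtain ⟨he, hx, -⟩ := split_uniq d p hnn hw2 hw h1' h2' h1 h2
    exact ⟨he.symm, Or.inl hx.symm⟩
  · -- divergence at a ≠ b after common prefix c
    have hy : wnorm d p y ≤ ra := by
      have := hnn a b; have := wnorm_nonneg d p hnn z; linarith
    have hzn : wnorm d p z ≤ ra := by
      have := hnn a b; have := wnorm_nonneg d p hnn y; linarith
    by_cases hcs : wnorm d p c ≤ s
    · -- the straddling letters are a and b
      have hda : s < wnorm d p c + d p a := by
        by_contra hcon
        push_neg at hcon
        have : wnorm d p w ≤ s + ra := by
          rw [hu, wnorm_append, wnorm_cons]; linarith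
        linarith
      have hdb : s < wnorm d p c + d p b := by
        by_contra hcon
        push_neg at hcon
        have : wnorm d p w' ≤ s + ra := by
          rw [hv, wnorm_append, wnorm_cons]; linarith
        linarith
      obtain ⟨hec, hxa, -⟩ := split_uniq d p hnn hw hu h1 h2 hcs hda
      obtain ⟨hec', hxb, -⟩ := split_uniq d p hnn hw' hv h1' h2' hcs hdb
      refine ⟨hec.trans hec'.symm, Or.inr ?_⟩
      rw [hxa, hxb, he]
      have := wnorm_nonneg d p hnn y; have := wnorm_nonneg d p hnn z; linarith
    · -- the straddling letter is inside c for both words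
      push_neg at hcs
      obtain ⟨e₀, x₀, u₀, hc, g1, g2⟩ := exists_split d p c s hs hcs
      have hwc : w = e₀ ++ x₀ :: (u₀ ++ a :: y) := by rw [hu, hc]; simp
      have hwc' : w' = e₀ ++ x₀ :: (u₀ ++ b :: z) := by rw [hv, hc]; simp
      obtain ⟨q1, q2, -⟩ := split_uniq d p hnn hw hwc h1 h2 g1 g2
      obtain ⟨q1', q2', -⟩ := split_uniq d p hnn hw' hwc' h1' h2' g1 g2
      exact ⟨q1.trans q1'.symm, Or.inl (q2.trans q2'.symm)⟩

end Aux

section Main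
variable {α : Type*} (d : α → α → ℝ) (p : α)

set_option maxHeartbeats 2000000 in
theorem apcd_fpdist (hsymm : ∀ a b, d a b = d b a) (hrefl : ∀ a, d a a = 0)
    (hnn : ∀ a b, 0 ≤ d a b) (htri2 : ∀ a b, d p a ≤ d p b + d a b)
    (htri3 : ∀ a b, d a b ≤ d p a + d p b) (hAPC : APCD d) :
    APCD (fpdist d p) := by
  intro R
  set r : ℕ → ℝ := fun i => 1 + ∑ j ∈ Finset.range (i + 1), |R j| with hr
  have hr1 : ∀ i, (1:ℝ) ≤ r i := fun i => by
    have h0 : (0:ℝ) ≤ ∑ j ∈ Finset.range (i+1), |R j| :=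
      Finset.sum_nonneg (fun _ _ => abs_nonneg _)
    simp only [hr]; linarith
  have hrR : ∀ i, R i ≤ r i := fun i => by
    have h1 : R i ≤ |R i| := le_abs_self _
    have h2 : |R i| ≤ ∑ j ∈ Finset.range (i+1), |R j| :=
      Finset.single_le_sum (f := fun j => |R j|) (fun _ _ => abs_nonneg _)
        (Finset.self_mem_range_succ i)
    simp only [hr]; linarith
  have hrmono : Monotone r := by
    intro i j hij
    have h := Finset.sum_le_sum_of_subset_of_nonneg
      (Finset.range_subset_range.mpr (by omega : i + 1 ≤ j + 1))
      (fun k _ _ => abs_nonneg (R k))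
    simp only [hr]; linarith
  obtain ⟨m₀, V₀, cov₀, dis₀, bdd₀⟩ := hAPC (fun i => r (1 + i))
  obtain ⟨m₁, V₁, cov₁, dis₁, bdd₁⟩ := hAPC (fun i => r (1 + m₀ + i))
  set n := 1 + m₀ + m₁ with hn
  set T : ℝ := r n + 1 with hT
  have hT0 : (0:ℝ) < T := by have := hr1 n; linarith
  set F : ℕ → List α → Set α → Set (List α) := fun k e S =>
    {w | ((k:ℝ) * T ≤ wnorm d p w ∧ wnorm d p w < ((k:ℝ) + 1) * T) ∧
      ∃ x u, w = e ++ x :: u ∧ x ∈ S ∧ wnorm d p e ≤ ((k:ℝ) - 1) * T ∧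
        ((k:ℝ) - 1) * T < wnorm d p e + d p x} with hF
  set U : ℕ → Set (Set (List α)) := fun c =>
    if c = 0 then {{w | wnorm d p w < T}}
    else if c < 1 + m₀ then
      {A | ∃ k e S, 1 ≤ k ∧ k % 2 = 1 ∧ S ∈ V₀ (c - 1) ∧ A = F k e S}
    else if c < n then
      {A | ∃ k e S, 1 ≤ k ∧ k % 2 = 0 ∧ S ∈ V₁ (c - 1 - m₀) ∧ A = F k e S}
    else ∅ with hU
  refine ⟨n, U, ?_, ?_, ?_⟩
  · -- coverage
    intro w
    by_cases hb : wnorm d p w < T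
    · refine ⟨0, by omega, {w' | wnorm d p w' < T}, ?_, hb⟩
      simp only [hU, if_pos rfl]
      rfl
    · push_neg at hb
      have hwnn := wnorm_nonneg d p hnn w
      set k := ⌊wnorm d p w / T⌋₊ with hk
      have hdiv1 : (1:ℝ) ≤ wnorm d p w / T := (le_div_iff₀ hT0).mpr (by linarith)
      have hk1 : 1 ≤ k := Nat.le_floor (by exact_mod_cast hdiv1)
      have hkl : (k:ℝ) * T ≤ wnorm d p w := by
        have h := Nat.floor_le (by positivity : (0:ℝ) ≤ wnorm d p w / T)
        have h2 := mul_le_mul_of_nonneg_right h hT0.le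
        rwa [div_mul_cancel₀ _ (ne_of_gt hT0)] at h2
      have hk2 : wnorm d p w < ((k:ℝ) + 1) * T := by
        have h : wnorm d p w / T < (k:ℝ) + 1 := by
          exact_mod_cast Nat.lt_floor_add_one (wnorm d p w / T)
        have h2 := mul_lt_mul_of_pos_right h hT0
        rwa [div_mul_cancel₀ _ (ne_of_gt hT0)] at h2
      have h1k : (1:ℝ) ≤ (k:ℝ) := by exact_mod_cast hk1
      have hs0 : (0:ℝ) ≤ ((k:ℝ) - 1) * T := by nlinarith
      have hsw : ((k:ℝ) - 1) * T < wnorm d p w := by nlinarith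
      obtain ⟨e, x, u, hsplit, g1, g2⟩ := exists_split d p w _ hs0 hsw
      rcases Nat.mod_two_eq_zero_or_one k with hp | hp
      · obtain ⟨i, hi, S, hS, hxS⟩ := cov₁ x
        refine ⟨1 + m₀ + i, by omega, F k e S, ?_, ?_⟩
        · simp only [hU]
          rw [if_neg (by omega : ¬(1 + m₀ + i = 0)),
            if_neg (by omega : ¬(1 + m₀ + i < 1 + m₀)),
            if_pos (by omega : 1 + m₀ + i < n)]
          have hidx : 1 + m₀ + i - 1 - m₀ = i := by omega
          exact ⟨k, e, S, hk1, hp, by rw [hidx]; exact hS, rfl⟩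
        · exact ⟨⟨hkl, hk2⟩, x, u, hsplit, hxS, g1, g2⟩
      · obtain ⟨i, hi, S, hS, hxS⟩ := cov₀ x
        refine ⟨1 + i, by omega, F k e S, ?_, ?_⟩
        · simp only [hU]
          rw [if_neg (by omega : ¬(1 + i = 0)), if_pos (by omega : 1 + i < 1 + m₀)]
          have hidx : 1 + i - 1 = i := by omega
          exact ⟨k, e, S, hk1, hp, by rw [hidx]; exact hS, rfl⟩
        · exact ⟨⟨hkl, hk2⟩, x, u, hsplit, hxS, g1, g2⟩
  · -- disjointness
    intro c hc A hA B hB hAB w hw w' hw'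
    have hrc : R c ≤ r c := hrR c
    have hrcn : r c ≤ r n := hrmono (le_of_lt hc)
    by_cases hc0 : c = 0
    · subst hc0
      simp only [hU, if_pos rfl, Set.mem_singleton_iff] at hA hB
      exact absurd (hA.trans hB.symm) hAB
    by_cases hc1 : c < 1 + m₀
    case pos =>
      simp only [hU, if_neg hc0, if_pos hc1, Set.mem_setOf_eq] at hA hB
      obtain ⟨k, e, S, hk1, hpar, hS, rfl⟩ := hA
      obtain ⟨k', e', S', hk1', hpar', hS', rfl⟩ := hB
      simp only [hF, Set.mem_setOf_eq] at hw hw'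
      obtain ⟨⟨hwl, hwr⟩, x, u, hsp, hxS, g1, g2⟩ := hw
      obtain ⟨⟨hwl', hwr'⟩, x', u', hsp', hxS', g1', g2'⟩ := hw'
      have hdisV : RDisj d (r c) (V₀ (c - 1)) := by
        have hci : 1 + (c - 1) = c := by omega
        have := dis₀ (c - 1) (by omega)
        rwa [hci] at this
      by_cases hkk : k = k'
      · subst hkk
        by_contra hcon
        push_neg at hcon
        have hρ : fpdist d p w w' ≤ r n := le_trans hcon (le_trans hrc hrcn)
        have h1k : (1:ℝ) ≤ (k:ℝ) := by exact_mod_cast hk1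
        have hs0 : (0:ℝ) ≤ ((k:ℝ) - 1) * T := by nlinarith
        have heq : ((k:ℝ) - 1) * T + r n = (k:ℝ) * T - 1 := by rw [hT]; ring
        have hnw : ((k:ℝ) - 1) * T + r n < wnorm d p w := by rw [heq]; linarith
        have hnw' : ((k:ℝ) - 1) * T + r n < wnorm d p w' := by rw [heq]; linarith
        obtain ⟨hee, hxx⟩ := key_split d p hnn w w' e e' x x' u u' _ _ hs0
          (le_trans zero_le_one (hr1 n)) hsp hsp' g1 g2 g1' g2' hnw hnw' hρ
        rcases hxx with hxe | hxd
        · subst hxe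
          by_cases hSS : S = S'
          · subst hSS; exact hAB (by rw [hee])
          · have hd := hdisV S hS S' hS' hSS x hxS x hxS'
            rw [hrefl x] at hd
            have := hr1 c; linarith
        · by_cases hSS : S = S'
          · subst hSS; exact hAB (by rw [hee])
          · have hd := hdisV S hS S' hS' hSS x hxS x' hxS'
            linarith
      · have hk2 : k + 2 ≤ k' ∨ k' + 2 ≤ k := by omega
        rcases hk2 with hlt | hlt
        · have hcast : ((k:ℝ) + 2) ≤ (k':ℝ) := by exact_mod_cast hlt
          have hle : wnorm d p w' ≤ wnorm d p w + fpdist d p w' w :=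
            wnorm_le d p hnn htri2 w' w
          rw [fpdist_comm d p hsymm w' w] at hle
          have hmul : ((k:ℝ) + 2) * T ≤ (k':ℝ) * T :=
            mul_le_mul_of_nonneg_right hcast hT0.le
          have hTr : T = r n + 1 := hT
          nlinarith
        · have hcast : ((k':ℝ) + 2) ≤ (k:ℝ) := by exact_mod_cast hlt
          have hle : wnorm d p w ≤ wnorm d p w' + fpdist d p w w' :=
            wnorm_le d p hnn htri2 w w'
          have hmul : ((k':ℝ) + 2) * T ≤ (k:ℝ) * T :=
            mul_le_mul_of_nonneg_right hcast hT0.le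
          have hTr : T = r n + 1 := hT
          nlinarith
    case neg =>
      simp only [hU, if_neg hc0, if_neg hc1, if_pos hc, Set.mem_setOf_eq] at hA hB
      obtain ⟨k, e, S, hk1, hpar, hS, rfl⟩ := hA
      obtain ⟨k', e', S', hk1', hpar', hS', rfl⟩ := hB
      simp only [hF, Set.mem_setOf_eq] at hw hw'
      obtain ⟨⟨hwl, hwr⟩, x, u, hsp, hxS, g1, g2⟩ := hw
      obtain ⟨⟨hwl', hwr'⟩, x', u', hsp', hxS', g1', g2'⟩ := hw'
      have hdisV : RDisj d (r c) (V₁ (c - 1 - m₀)) := by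
        have hci : 1 + m₀ + (c - 1 - m₀) = c := by omega
        have := dis₁ (c - 1 - m₀) (by omega)
        rwa [hci] at this
      by_cases hkk : k = k'
      · subst hkk
        by_contra hcon
        push_neg at hcon
        have hρ : fpdist d p w w' ≤ r n := le_trans hcon (le_trans hrc hrcn)
        have h1k : (1:ℝ) ≤ (k:ℝ) := by exact_mod_cast hk1
        have hs0 : (0:ℝ) ≤ ((k:ℝ) - 1) * T := by nlinarith
        have heq : ((k:ℝ) - 1) * T + r n = (k:ℝ) * T - 1 := by rw [hT]; ring
        have hnw : ((k:ℝ) - 1) * T + r n < wnorm d p w := by rw [heq]; linarith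
        have hnw' : ((k:ℝ) - 1) * T + r n < wnorm d p w' := by rw [heq]; linarith
        obtain ⟨hee, hxx⟩ := key_split d p hnn w w' e e' x x' u u' _ _ hs0
          (le_trans zero_le_one (hr1 n)) hsp hsp' g1 g2 g1' g2' hnw hnw' hρ
        rcases hxx with hxe | hxd
        · subst hxe
          by_cases hSS : S = S'
          · subst hSS; exact hAB (by rw [hee])
          · have hd := hdisV S hS S' hS' hSS x hxS x hxS'
            rw [hrefl x] at hd
            have := hr1 c; linarith
        · by_cases hSS : S = S'
          · subst hSS; exact hAB (by rw [hee])
          · have hd := hdisV S hS S' hS' hSS x hxS x' hxS'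
            linarith
      · have hk2 : k + 2 ≤ k' ∨ k' + 2 ≤ k := by omega
        rcases hk2 with hlt | hlt
        · have hcast : ((k:ℝ) + 2) ≤ (k':ℝ) := by exact_mod_cast hlt
          have hle : wnorm d p w' ≤ wnorm d p w + fpdist d p w' w :=
            wnorm_le d p hnn htri2 w' w
          rw [fpdist_comm d p hsymm w' w] at hle
          have hmul : ((k:ℝ) + 2) * T ≤ (k':ℝ) * T :=
            mul_le_mul_of_nonneg_right hcast hT0.le
          have hTr : T = r n + 1 := hT
          nlinarith
        · have hcast : ((k':ℝ) + 2) ≤ (k:ℝ) := by exact_mod_cast hlt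
          have hle : wnorm d p w ≤ wnorm d p w' + fpdist d p w w' :=
            wnorm_le d p hnn htri2 w w'
          have hmul : ((k':ℝ) + 2) * T ≤ (k:ℝ) * T :=
            mul_le_mul_of_nonneg_right hcast hT0.le
          have hTr : T = r n + 1 := hT
          nlinarith
  · -- boundedness
    intro c hc
    by_cases hc0 : c = 0
    · subst hc0
      refine ⟨2 * T, ?_⟩
      intro A hA w hw w' hw'
      simp only [hU, if_pos rfl, Set.mem_singleton_iff] at hA
      subst hA
      simp only [Set.mem_setOf_eq] at hw hw'
      have h1 := fpdist_le d p hnn htri3 w w'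
      have h2 := wnorm_nonneg d p hnn w
      have h3 := wnorm_nonneg d p hnn w'
      linarith
    by_cases hc1 : c < 1 + m₀
    case pos =>
      obtain ⟨Bi, hBi⟩ := bdd₀ (c - 1) (by omega)
      refine ⟨max Bi 0 + 4 * T, ?_⟩
      intro A hA w hw w' hw'
      simp only [hU, if_neg hc0, if_pos hc1, Set.mem_setOf_eq] at hA
      obtain ⟨k, e, S, hk1, hpar, hS, rfl⟩ := hA
      simp only [hF, Set.mem_setOf_eq] at hw hw'
      obtain ⟨⟨hwl, hwr⟩, x, u, hsp, hxS, g1, g2⟩ := hw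
      obtain ⟨⟨hwl', hwr'⟩, x', u', hsp', hxS', g1', g2'⟩ := hw'
      have hwe : wnorm d p w = wnorm d p e + (d p x + wnorm d p u) := by
        rw [hsp, wnorm_append, wnorm_cons]
      have hwe' : wnorm d p w' = wnorm d p e + (d p x' + wnorm d p u') := by
        rw [hsp', wnorm_append, wnorm_cons]
      have hexp : ((k:ℝ) + 1) * T - ((k:ℝ) - 1) * T = 2 * T := by ring
      have hu2 : wnorm d p u ≤ 2 * T := by linarith
      have hu2' : wnorm d p u' ≤ 2 * T := by linarith
      have hrw : fpdist d p w w' = fpdist d p (x :: u) (x' :: u') := by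
        rw [hsp, hsp', fpdist_append]
      by_cases hxx : x = x'
      · subst hxx
        rw [hrw, fpdist_cons_eq]
        have h1 := fpdist_le d p hnn htri3 u u'
        have h2 := le_max_right Bi (0:ℝ)
        linarith
      · rw [hrw, fpdist_cons_ne d p hxx]
        have h1 := hBi S hS x hxS x' hxS'
        have h2 := le_max_left Bi (0:ℝ)
        linarith
    case neg =>
      obtain ⟨Bi, hBi⟩ := bdd₁ (c - 1 - m₀) (by omega)
      refine ⟨max Bi 0 + 4 * T, ?_⟩
      intro A hA w hw w' hw'
      simp only [hU, if_neg hc0, if_neg hc1, if_pos hc, Set.mem_setOf_eq] at hA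
      obtain ⟨k, e, S, hk1, hpar, hS, rfl⟩ := hA
      simp only [hF, Set.mem_setOf_eq] at hw hw'
      obtain ⟨⟨hwl, hwr⟩, x, u, hsp, hxS, g1, g2⟩ := hw
      obtain ⟨⟨hwl', hwr'⟩, x', u', hsp', hxS', g1', g2'⟩ := hw'
      have hwe : wnorm d p w = wnorm d p e + (d p x + wnorm d p u) := by
        rw [hsp, wnorm_append, wnorm_cons]
      have hwe' : wnorm d p w' = wnorm d p e + (d p x' + wnorm d p u') := by
        rw [hsp', wnorm_append, wnorm_cons]
      have hexp : ((k:ℝ) + 1) * T - ((k:ℝ) - 1) * T = 2 * T := by ring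
      have hu2 : wnorm d p u ≤ 2 * T := by linarith
      have hu2' : wnorm d p u' ≤ 2 * T := by linarith
      have hrw : fpdist d p w w' = fpdist d p (x :: u) (x' :: u') := by
        rw [hsp, hsp', fpdist_append]
      by_cases hxx : x = x'
      · subst hxx
        rw [hrw, fpdist_cons_eq]
        have h1 := fpdist_le d p hnn htri3 u u'
        have h2 := le_max_right Bi (0:ℝ)
        linarith
      · rw [hrw, fpdist_cons_ne d p hxx]
        have h1 := hBi S hS x hxS x' hxS'
        have h2 := le_max_left Bi (0:ℝ)
        linarith

end Main

theorem APCD.pullback {β α : Type*} {dα : α → α → ℝ} (dβ : β → β → ℝ) (f : β → α)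
    (hd : ∀ u v, dβ u v = dα (f u) (f v)) (h : APCD dα) : APCD dβ := by
  intro R
  obtain ⟨n, 𝒰, hcov, hdisj, hbdd⟩ := h R
  refine ⟨n, fun i => (fun S => f ⁻¹' S) '' 𝒰 i, ?_, ?_, ?_⟩
  · intro x
    obtain ⟨i, hi, S, hS, hx⟩ := hcov (f x)
    exact ⟨i, hi, f ⁻¹' S, ⟨S, hS, rfl⟩, hx⟩
  · intro i hi A hA B hB hAB x hx y hy
    obtain ⟨S, hS, rfl⟩ := hA
    obtain ⟨S', hS', rfl⟩ := hB
    have hne : S ≠ S' := by rintro rfl; exact hAB rfl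
    rw [hd]
    exact hdisj i hi S hS S' hS' hne _ hx _ hy
  · intro i hi
    obtain ⟨B, hB⟩ := hbdd i hi
    refine ⟨B, ?_⟩
    rintro A ⟨S, hS, rfl⟩ x hx y hy
    rw [hd]
    exact hB S hS _ hx _ hy

section Wedge
variable {X Y : Type*} [MetricSpace X] [MetricSpace Y] (x₀ : X) (y₀ : Y)

theorem wedgeDist_inl_inl (a b : X) : wedgeDist x₀ y₀ (Sum.inl a) (Sum.inl b) = dist a b := rfl
theorem wedgeDist_inl_inr (a : X) (b : Y) :
    wedgeDist x₀ y₀ (Sum.inl a) (Sum.inr b) = dist a x₀ + dist y₀ b := rfl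
theorem wedgeDist_inr_inl (a : Y) (b : X) :
    wedgeDist x₀ y₀ (Sum.inr a) (Sum.inl b) = dist a y₀ + dist x₀ b := rfl
theorem wedgeDist_inr_inr (a b : Y) : wedgeDist x₀ y₀ (Sum.inr a) (Sum.inr b) = dist a b := rfl

theorem wedgeDist_symm (a b : X ⊕ Y) : wedgeDist x₀ y₀ a b = wedgeDist x₀ y₀ b a := by
  cases a <;> cases b <;>
    simp [wedgeDist_inl_inl, wedgeDist_inl_inr, wedgeDist_inr_inl, wedgeDist_inr_inr,
      dist_comm] <;> ring

theorem wedgeDist_refl (a : X ⊕ Y) : wedgeDist x₀ y₀ a a = 0 := by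
  cases a <;> simp [wedgeDist_inl_inl, wedgeDist_inr_inr]

theorem wedgeDist_nonneg (a b : X ⊕ Y) : 0 ≤ wedgeDist x₀ y₀ a b := by
  cases a <;> cases b <;>
    simp only [wedgeDist_inl_inl, wedgeDist_inl_inr, wedgeDist_inr_inl, wedgeDist_inr_inr] <;>
    positivity

theorem wedgeDist_tri2 (a b : X ⊕ Y) :
    wedgeDist x₀ y₀ (Sum.inl x₀) a ≤ wedgeDist x₀ y₀ (Sum.inl x₀) b + wedgeDist x₀ y₀ a b := by
  rcases a with a | a <;> rcases b with b | b <;>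
    simp only [wedgeDist_inl_inl, wedgeDist_inl_inr, wedgeDist_inr_inl, wedgeDist_inr_inr]
  · linarith [dist_triangle x₀ b a, dist_comm a b]
  · linarith [dist_comm a x₀, dist_self x₀, dist_nonneg (x := y₀) (y := b)]
  · linarith [dist_self x₀, dist_comm a y₀, dist_nonneg (x := x₀) (y := b)]
  · linarith [dist_self x₀, dist_triangle y₀ b a, dist_comm a b]

theorem wedgeDist_tri3 (a b : X ⊕ Y) :
    wedgeDist x₀ y₀ a b ≤ wedgeDist x₀ y₀ (Sum.inl x₀) a + wedgeDist x₀ y₀ (Sum.inl x₀) b := by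
  rcases a with a | a <;> rcases b with b | b <;>
    simp only [wedgeDist_inl_inl, wedgeDist_inl_inr, wedgeDist_inr_inl, wedgeDist_inr_inr]
  · linarith [dist_triangle a x₀ b, dist_comm a x₀]
  · linarith [dist_comm a x₀, dist_self x₀]
  · linarith [dist_comm a y₀, dist_self x₀]
  · linarith [dist_triangle a y₀ b, dist_comm a y₀, dist_self x₀]

theorem wedge_apcd (hX : APCD (dist : X → X → ℝ)) (hY : APCD (dist : Y → Y → ℝ)) :
    APCD (wedgeDist x₀ y₀) := by
  intro R
  obtain ⟨nX, UX, covX, disX, bddX⟩ := hX (fun i => R (2 * i))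
  obtain ⟨nY, UY, covY, disY, bddY⟩ := hY (fun i => R (2 * i + 1))
  refine ⟨2 * nX + 2 * nY + 2, fun c =>
    if c % 2 = 0 then (if c / 2 < nX then (fun S => Sum.inl '' S) '' UX (c / 2) else ∅)
    else (if c / 2 < nY then (fun S => Sum.inr '' S) '' UY (c / 2) else ∅), ?_, ?_, ?_⟩
  · intro z
    cases z with
    | inl a =>
      obtain ⟨i, hi, S, hS, ha⟩ := covX a
      refine ⟨2 * i, by omega, Sum.inl '' S, ?_, ⟨a, ha, rfl⟩⟩
      dsimp only
      rw [if_pos (by omega : 2 * i % 2 = 0), if_pos (by omega : 2 * i / 2 < nX)]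
      have h2 : 2 * i / 2 = i := by omega
      rw [h2]
      exact ⟨S, hS, rfl⟩
    | inr b =>
      obtain ⟨i, hi, S, hS, hb⟩ := covY b
      refine ⟨2 * i + 1, by omega, Sum.inr '' S, ?_, ⟨b, hb, rfl⟩⟩
      dsimp only
      rw [if_neg (by omega : ¬(2 * i + 1) % 2 = 0), if_pos (by omega : (2 * i + 1) / 2 < nY)]
      have h2 : (2 * i + 1) / 2 = i := by omega
      rw [h2]
      exact ⟨S, hS, rfl⟩
  · intro c hc A hA B hB hAB x hx y hy
    dsimp only at hA hB
    by_cases hp : c % 2 = 0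
    · rw [if_pos hp] at hA hB
      by_cases hq : c / 2 < nX
      · rw [if_pos hq] at hA hB
        obtain ⟨S, hS, rfl⟩ := hA
        obtain ⟨S', hS', rfl⟩ := hB
        obtain ⟨a, ha, rfl⟩ := hx
        obtain ⟨b, hb, rfl⟩ := hy
        have hne : S ≠ S' := by
          rintro rfl
          exact hAB rfl
        have hd := disX (c / 2) hq S hS S' hS' hne a ha b hb
        have hcc : 2 * (c / 2) = c := by omega
        rw [hcc] at hd
        exact hd
      · rw [if_neg hq] at hA
        exact absurd hA (Set.notMem_empty A)
    · rw [if_neg hp] at hA hB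
      by_cases hq : c / 2 < nY
      · rw [if_pos hq] at hA hB
        obtain ⟨S, hS, rfl⟩ := hA
        obtain ⟨S', hS', rfl⟩ := hB
        obtain ⟨a, ha, rfl⟩ := hx
        obtain ⟨b, hb, rfl⟩ := hy
        have hne : S ≠ S' := by
          rintro rfl
          exact hAB rfl
        have hd := disY (c / 2) hq S hS S' hS' hne a ha b hb
        have hcc : 2 * (c / 2) + 1 = c := by omega
        rw [hcc] at hd
        exact hd
      · rw [if_neg hq] at hA
        exact absurd hA (Set.notMem_empty A)
  · intro c hc
    by_cases hp : c % 2 = 0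
    · by_cases hq : c / 2 < nX
      · obtain ⟨B, hB⟩ := bddX (c / 2) hq
        refine ⟨B, ?_⟩
        intro A hA x hx y hy
        dsimp only at hA
        rw [if_pos hp, if_pos hq] at hA
        obtain ⟨S, hS, rfl⟩ := hA
        obtain ⟨a, ha, rfl⟩ := hx
        obtain ⟨b, hb, rfl⟩ := hy
        exact hB S hS a ha b hb
      · refine ⟨0, ?_⟩
        intro A hA
        dsimp only at hA
        rw [if_pos hp, if_neg hq] at hA
        exact absurd hA (Set.notMem_empty A)
    · by_cases hq : c / 2 < nY
      · obtain ⟨B, hB⟩ := bddY (c / 2) hq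
        refine ⟨B, ?_⟩
        intro A hA x hx y hy
        dsimp only at hA
        rw [if_neg hp, if_pos hq] at hA
        obtain ⟨S, hS, rfl⟩ := hA
        obtain ⟨a, ha, rfl⟩ := hx
        obtain ⟨b, hb, rfl⟩ := hy
        exact hB S hS a ha b hb
      · refine ⟨0, ?_⟩
        intro A hA
        dsimp only at hA
        rw [if_neg hp, if_neg hq] at hA
        exact absurd hA (Set.notMem_empty A)

end Wedge


/-- If a metrically discrete pointed metric space `X` has asymptotic property C,
then the free product `*X` has asymptotic property C; consequently, for
metrically discrete `X` and `Y` with asymptotic property C, the free product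
`X * Y` (realized as alternating words inside `*(X ∨ Y)`) has asymptotic
property C. -/
theorem apc_free_product {X Y : Type*} [MetricSpace X] [MetricSpace Y]
    (x₀ : X) (y₀ : Y)
    (hdiscX : ∃ E > (0 : ℝ), ∀ x y : X, x ≠ y → E ≤ dist x y)
    (hdiscY : ∃ E > (0 : ℝ), ∀ x y : Y, x ≠ y → E ≤ dist x y)
    (hX : APCD (dist : X → X → ℝ)) (hY : APCD (dist : Y → Y → ℝ)) :
    APCD (fun u v : {l : List X // ∀ a ∈ l, a ≠ x₀} =>
      fpdist dist x₀ u.1 v.1) ∧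
    APCD (fun u v : {l : List (X ⊕ Y) //
        (∀ a ∈ l, a ≠ Sum.inl x₀ ∧ a ≠ Sum.inr y₀) ∧ l.Chain' DiffSide} =>
      fpdist (wedgeDist x₀ y₀) (Sum.inl x₀) u.1 v.1) := by
  constructor
  · exact APCD.pullback _ (fun u : {l : List X // ∀ a ∈ l, a ≠ x₀} => u.1)
      (fun u v => rfl)
      (apcd_fpdist dist x₀ (fun a b => dist_comm a b) (fun a => dist_self a)
        (fun a b => dist_nonneg)
        (fun a b => by have h := dist_triangle x₀ b a; rwa [dist_comm b a] at h)
        (fun a b => by have h := dist_triangle a x₀ b; rwa [dist_comm a x₀] at h)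
        hX)
  · exact APCD.pullback _
      (fun u : {l : List (X ⊕ Y) //
        (∀ a ∈ l, a ≠ Sum.inl x₀ ∧ a ≠ Sum.inr y₀) ∧ l.Chain' DiffSide} => u.1)
      (fun u v => rfl)
      (apcd_fpdist (wedgeDist x₀ y₀) (Sum.inl x₀) (wedgeDist_symm x₀ y₀)
        (wedgeDist_refl x₀ y₀) (wedgeDist_nonneg x₀ y₀) (wedgeDist_tri2 x₀ y₀)
        (wedgeDist_tri3 x₀ y₀) (wedge_apcd x₀ y₀ hX hY))
end
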